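/- arXiv:2009.08222 — 8 statements merged into one kernel-verified Lean document; each statement's English description precedes it below -/
import Mathlib

section
/- Let H be a positive integer with Zeckendorf expansion H = F_{m_0} + F_{m_1} + ... + F_{m_k}. If k ≥ 1, then R(H) = a_k·⌊m_k/2⌋ − ε_k·a_{k−1}; if k = 0, then R(H) = ⌊m_0/2⌋. -/
open scoped BigOperators
open Filter Topology

/-- A natural number is a Fibonacci number, i.e. equals `F m` for some `m ≥ 1`
(with `F 1 = F 2 = 1`). -/
def IsFibNum (x : ℕ) : Prop := ∃ m : ℕ, 0 < m ∧ Nat.fib m = x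

/-- `R n` counts the partitions of `n` into distinct Fibonacci numbers:
the number of finite sets of Fibonacci numbers with sum `n` (so `R 0 = 1`). -/
noncomputable def R (n : ℕ) : ℕ :=
  Nat.card {S : Finset ℕ // (∀ x ∈ S, IsFibNum x) ∧ (∑ x ∈ S, x) = n}

/-- The summatory function `A H = ∑_{n=0}^{H} R n`. -/
noncomputable def A (H : ℕ) : ℕ := ∑ n ∈ Finset.range (H + 1), R n

/-!
Let `boundedR n x` count the partitions of `x` into distinct `F j` with `2 ≤ j ≤ n`; it equals
`R x` as soon as `x < F (n + 1)`. Deciding whether `F (n + 1)` is used gives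
`boundedR (n + 1) (x + F (n + 1)) = boundedR n (x + F (n + 1)) + boundedR n x`, and
`boundedR n x = 0` once `x + 2 > F (n + 2)`. Reading the Zeckendorf expansion from its smallest
part upwards, these two facts move the pair `boundedR q (T + F (q + 1))`, `boundedR q (T + F q)`
up one level at a time, gaining `R T` every two levels; across the gap between consecutive parts
this yields `R x_ℓ = t R x_{ℓ+1} - ε R x_{ℓ+2}`. From `R x_{k+1} = R 0 = 1` and
`R x_k = ⌊m_k / 2⌋`, the continuants `a_ℓ` unfold this recurrence from the top.
-/

open Finset Nat

/-- Indices start at `2` since `F 1 = F 2`, so that distinct indices give distinct parts. -/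
def boundedR (n x : ℕ) : ℕ :=
  #{S ∈ (Icc 2 n).powerset | ∑ j ∈ S, fib j = x}

lemma sum_fib_Icc_two_add_two {n : ℕ} (hn : 1 ≤ n) :
    ∑ j ∈ Icc 2 n, fib j + 2 = fib (n + 2) := by
  induction n, hn using Nat.le_induction with
  | base => rfl
  | succ n hn ih =>
    have h : fib (n + 1 + 2) = fib (n + 1) + fib (n + 2) := fib_add_two
    rw [← Finset.insert_Icc_right_eq_Icc_add_one (by omega), sum_insert (by simp)]
    omega

lemma boundedR_eq_zero {n x : ℕ} (hn : 1 ≤ n) (hx : fib (n + 2) < x + 2) :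
    boundedR n x = 0 := by
  refine card_eq_zero.2 (filter_eq_empty_iff.2 fun S hS => ?_)
  have := sum_le_sum_of_subset (f := fib) (mem_powerset.1 hS)
  have := sum_fib_Icc_two_add_two hn
  omega

lemma boundedR_succ {n : ℕ} (hn : 1 ≤ n) (x : ℕ) :
    boundedR (n + 1) x =
      boundedR n x + #{S ∈ (Icc 2 n).powerset | ∑ j ∈ S, fib j + fib (n + 1) = x} := by
  have hn' : n + 1 ∉ Icc 2 n := by simp
  simp only [boundedR, card_filter]
  rw [← Finset.insert_Icc_right_eq_Icc_add_one (by omega), sum_powerset_insert hn']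
  congr 1
  refine sum_congr rfl fun S hS => ?_
  rw [sum_insert fun h => hn' (mem_powerset.1 hS h), add_comm (fib _)]

lemma boundedR_succ_add_fib {n : ℕ} (hn : 1 ≤ n) (x : ℕ) :
    boundedR (n + 1) (x + fib (n + 1)) = boundedR n (x + fib (n + 1)) + boundedR n x := by
  simp only [boundedR_succ hn, add_left_inj]
  rfl

lemma IsFibNum.exists_mem_Icc {y n : ℕ} (hy : IsFibNum y) (hyn : y < fib (n + 1)) :
    ∃ j ∈ Icc 2 n, fib j = y := by
  obtain ⟨j, hj, rfl⟩ := hy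
  have hfib : fib (max j 2) = fib j := by
    rcases Nat.lt_or_ge j 2 with h | h
    · interval_cases j; rfl
    · rw [max_eq_left h]
  rw [← hfib] at hyn ⊢
  exact ⟨max j 2, mem_Icc.2 ⟨le_max_right _ _, by
    have := (fib_lt_fib (le_max_right j 2)).1 hyn; omega⟩, rfl⟩

lemma injOn_fib_of_subset_Icc {I : Finset ℕ} {n : ℕ} (hI : I ⊆ Icc 2 n) : Set.InjOn fib I :=
  fib_strictMonoOn.injOn.mono fun _ hj => (mem_Icc.1 (hI hj)).1

lemma R_eq_boundedR {n x : ℕ} (hx : x < fib (n + 1)) : R x = boundedR n x := by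
  rw [R, boundedR, ← Finset.card_image_of_injOn (f := image fib)]
  · refine Nat.subtype_card _ fun S => ?_
    simp only [mem_image, mem_filter, mem_powerset]
    constructor
    · rintro ⟨I, ⟨hI, rfl⟩, rfl⟩
      refine ⟨fun y hy => ?_, sum_image (injOn_fib_of_subset_Icc hI)⟩
      obtain ⟨j, hj, rfl⟩ := mem_image.1 hy
      exact ⟨j, by have := (mem_Icc.1 (hI hj)).1; omega, rfl⟩
    · rintro ⟨hS, rfl⟩
      have hSI : ({j ∈ Icc 2 n | fib j ∈ S} : Finset ℕ).image fib = S := by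
        ext y
        simp only [mem_image, mem_filter]
        refine ⟨fun ⟨_, ⟨_, hj⟩, hjy⟩ => hjy ▸ hj, fun hy => ?_⟩
        obtain ⟨j, hj, rfl⟩ := (hS y hy).exists_mem_Icc
          (lt_of_le_of_lt (single_le_sum (f := fun y => y) (fun _ _ => Nat.zero_le _) hy) hx)
        exact ⟨j, ⟨hj, hy⟩, rfl⟩
      refine ⟨_, ⟨filter_subset _ _, ?_⟩, hSI⟩
      exact (sum_image (f := fun y => y) (injOn_fib_of_subset_Icc (filter_subset _ _))).symm.trans
        (by rw [hSI])
  · exact (image_injOn_powerset_of_injOn (injOn_fib_of_subset_Icc subset_rfl)).mono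
      (coe_subset.2 (filter_subset _ _))

section

variable {q T : ℕ}

lemma boundedR_succ_add_fib_add_two (hq : 1 ≤ q) :
    boundedR (q + 1) (T + fib (q + 2)) = boundedR q (T + fib q) := by
  have hfib : fib (q + 2) = fib q + fib (q + 1) := fib_add_two
  rw [hfib, ← add_assoc, boundedR_succ_add_fib hq,
    boundedR_eq_zero (x := T + fib q + fib (q + 1)) hq (by omega), zero_add]

lemma boundedR_succ_add_fib_succ (hq : 1 ≤ q) (hT : T < fib (q + 1)) :
    boundedR (q + 1) (T + fib (q + 1)) = boundedR q (T + fib (q + 1)) + R T := by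
  rw [boundedR_succ_add_fib hq, R_eq_boundedR hT]

lemma boundedR_add_fib_add_fib {n : ℕ} (hn : 2 ≤ n) (hT : T < fib n) :
    boundedR n (T + fib n + fib n) + R T = boundedR n (T + fib n) := by
  obtain ⟨q, rfl⟩ : ∃ q, n = q + 1 := ⟨n - 1, by omega⟩
  have hfib : fib (q + 2) = fib q + fib (q + 1) := fib_add_two
  have hq : 1 ≤ q := by omega
  have hx : fib (q + 2) < T + fib (q + 1) + fib (q + 1) + 2 := by
    linarith [fib_le_fib_succ (n := q)]
  rw [boundedR_succ_add_fib hq, boundedR_eq_zero hq hx, zero_add, boundedR_succ_add_fib_succ hq hT]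

lemma boundedR_add_two_levels (hq : 1 ≤ q) (hT : T < fib (q + 1)) :
    boundedR (q + 2) (T + fib (q + 3)) = boundedR q (T + fib (q + 1)) + R T ∧
      boundedR (q + 2) (T + fib (q + 2)) = boundedR q (T + fib q) + R T := by
  have hT' : T < fib (q + 2) := hT.trans_le (fib_mono (by omega))
  constructor
  · rw [boundedR_succ_add_fib_add_two (by omega), boundedR_succ_add_fib_succ hq hT]
  · rw [boundedR_succ_add_fib_succ (by omega) hT', boundedR_succ_add_fib_add_two hq]

end

lemma boundedR_run {p T : ℕ} (hp : 1 ≤ p) (hT : T < fib (p + 1)) (j : ℕ) :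
    boundedR (p + 2 * j) (T + fib (p + 2 * j + 1)) = boundedR p (T + fib (p + 1)) + j * R T ∧
      boundedR (p + 2 * j) (T + fib (p + 2 * j)) = boundedR p (T + fib p) + j * R T := by
  induction j with
  | zero => simp
  | succ j ih =>
    have hq : T < fib (p + 2 * j + 1) := hT.trans_le (fib_mono (by omega))
    obtain ⟨h₁, h₂⟩ := boundedR_add_two_levels (by omega) hq
    rw [show p + 2 * (j + 1) = p + 2 * j + 2 by ring]
    exact ⟨by rw [h₁, ih.1]; ring, by rw [h₂, ih.2]; ring⟩

/-- `hA` and `hB` hold when the largest part of `T` is `F p` and `r = R (T - F p)`; the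
coefficients are the paper's `t` and `ε` for the gap `D`. -/
lemma R_add_fib {p D T r : ℕ} (hp : 1 ≤ p) (hT : T < fib (p + 1))
    (hT' : T + fib (p + D) < fib (p + D + 1)) (hA : boundedR p (T + fib (p + 1)) = 0)
    (hB : boundedR p (T + fib p) + r = R T) :
    (R (T + fib (p + D)) : ℤ) =
      ((D + 2) / 2 : ℕ) * R T - (2 * ((D + 2) / 2 : ℕ) - 1 - D : ℤ) * r := by
  have hB' : (boundedR p (T + fib p) : ℤ) = R T - r := by omega
  rw [R_eq_boundedR hT']
  obtain ⟨j, rfl | rfl⟩ := Nat.even_or_odd' D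
  · rw [(boundedR_run hp hT j).2, show (2 * j + 2) / 2 = j + 1 by omega]
    push_cast
    rw [hB']
    ring
  · have hq : T < fib (p + 2 * j + 1) := hT.trans_le (fib_mono (by omega))
    rw [← add_assoc, boundedR_succ_add_fib_succ (by omega) hq, (boundedR_run hp hT j).1, hA,
      show (2 * j + 1 + 2) / 2 = j + 1 by omega]
    push_cast
    ring

lemma R_zero : R 0 = 1 := by
  rw [R_eq_boundedR (n := 1) (by decide)]
  decide

lemma R_fib {n : ℕ} (hn : 2 ≤ n) : R (fib n) = n / 2 := by
  obtain ⟨D, rfl⟩ : ∃ D, n = 1 + D := ⟨n - 1, by omega⟩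
  have h := R_add_fib (T := 0) (r := 1) le_rfl (by decide) (by simpa using fib_lt_fib_succ hn)
    (by decide) (by rw [R_zero]; decide)
  rw [zero_add, R_zero] at h
  omega

/-- The paper's `x_ℓ`. -/
def zeckTail (m : ℕ → ℕ) (k ℓ : ℕ) : ℕ := ∑ i ∈ Ico ℓ (k + 1), fib (m i)

section ZeckendorfTail

variable {m : ℕ → ℕ} {k : ℕ}

lemma zeckTail_eq_add {ℓ : ℕ} (hℓ : ℓ ≤ k) :
    zeckTail m k ℓ = zeckTail m k (ℓ + 1) + fib (m ℓ) := by
  rw [zeckTail, sum_eq_sum_Ico_succ_bot (by omega), add_comm, zeckTail]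

@[simp]
lemma zeckTail_succ_self : zeckTail m k (k + 1) = 0 := by simp [zeckTail]

variable (hgap : ∀ i < k, m (i + 1) + 2 ≤ m i) (hmk : 2 ≤ m k)
include hgap hmk

lemma two_le_apply_of_le {ℓ : ℕ} (hℓ : ℓ ≤ k) : 2 ≤ m ℓ := by
  rcases hℓ.lt_or_eq with h | rfl
  · linarith [hgap ℓ h]
  · exact hmk

lemma zeckTail_lt_fib {ℓ : ℕ} (hℓ : ℓ ≤ k) : zeckTail m k ℓ < fib (m ℓ + 1) := by
  induction hℓ using Nat.decreasingInduction with
  | self => simpa [zeckTail_eq_add le_rfl] using fib_lt_fib_succ hmk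
  | of_succ ℓ hℓ ih =>
    obtain ⟨n, hn⟩ : ∃ n, m ℓ = n + 1 := ⟨m ℓ - 1, by have := hgap ℓ hℓ; omega⟩
    have hmono : fib (m (ℓ + 1) + 1) ≤ fib n := fib_mono (by have := hgap ℓ hℓ; omega)
    have hfib : fib (n + 1 + 1) = fib n + fib (n + 1) := fib_add_two
    rw [zeckTail_eq_add hℓ.le, hn]
    omega

lemma zeckTail_succ_lt_fib {ℓ : ℕ} (hℓ : ℓ ≤ k) :
    zeckTail m k (ℓ + 1) < fib (m ℓ) := by
  rcases hℓ.lt_or_eq with h | rfl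
  · exact (zeckTail_lt_fib hgap hmk h).trans_le (fib_mono (by linarith [hgap ℓ h]))
  · simpa using fib_pos.2 (by omega)

lemma R_zeckTail {ℓ : ℕ} (hℓ : ℓ < k) :
    (R (zeckTail m k ℓ) : ℤ) =
      ((m ℓ - m (ℓ + 1) + 2) / 2 : ℕ) * R (zeckTail m k (ℓ + 1)) -
        (2 * ((m ℓ - m (ℓ + 1) + 2) / 2 : ℕ) - 1 - m ℓ + m (ℓ + 1) : ℤ) *
          R (zeckTail m k (ℓ + 2)) := by
  set p := m (ℓ + 1)
  set T := zeckTail m k (ℓ + 1)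
  obtain ⟨D, hD⟩ : ∃ D, m ℓ = p + D := ⟨m ℓ - p, by have := hgap ℓ hℓ; omega⟩
  have hp : 2 ≤ p := two_le_apply_of_le hgap hmk hℓ
  have hT : T < fib (p + 1) := zeckTail_lt_fib hgap hmk hℓ
  have hTT : T = zeckTail m k (ℓ + 2) + fib p := zeckTail_eq_add hℓ
  have hA : boundedR p (T + fib (p + 1)) = 0 := by
    have hfib : fib (p + 2) = fib p + fib (p + 1) := fib_add_two
    exact boundedR_eq_zero (by omega) (by omega)
  have hB : boundedR p (T + fib p) + R (zeckTail m k (ℓ + 2)) = R T := by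
    rw [hTT, boundedR_add_fib_add_fib hp (zeckTail_succ_lt_fib hgap hmk hℓ),
      R_eq_boundedR (n := p)]
    rwa [← hTT]
  have hT' : T + fib (p + D) < fib (p + D + 1) := by
    rw [← hD, ← zeckTail_eq_add hℓ.le]
    exact zeckTail_lt_fib hgap hmk hℓ.le
  rw [zeckTail_eq_add hℓ.le, hD, R_add_fib (by omega) hT hT' hA hB, Nat.add_sub_cancel_left]
  push_cast
  ring

end ZeckendorfTail

lemma continuant_unfold {k : ℕ} {t ε a r : ℕ → ℤ}
    (hr : ∀ ℓ < k, r ℓ = t (ℓ + 1) * r (ℓ + 1) - ε (ℓ + 1) * r (ℓ + 2))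
    (ha0 : a 0 = 1) (ha1 : 1 ≤ k → a 1 = t 1)
    (ha : ∀ l : ℕ, 1 ≤ l → l ≤ k - 1 → a (l + 1) = t (l + 1) * a l - ε l * a (l - 1)) :
    ∀ ℓ < k, r 0 = a (ℓ + 1) * r (ℓ + 1) - ε (ℓ + 1) * a ℓ * r (ℓ + 2) := by
  intro ℓ hℓ
  induction ℓ with
  | zero => rw [hr 0 hℓ, ha1 (by omega), ha0]; ring
  | succ ℓ ih =>
    rw [ih (by omega), hr (ℓ + 1) hℓ, ha (ℓ + 1) (by omega) (by omega), Nat.add_sub_cancel]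
    ring

theorem fibonacci_partition_exact_formula_general
    (H k : ℕ) (m t : ℕ → ℕ) (ε a : ℕ → ℤ)
    (hexp : H = ∑ i ∈ Finset.range (k + 1), Nat.fib (m i))
    (hgap : ∀ i : ℕ, 1 ≤ i → i ≤ k → m i + 2 ≤ m (i - 1))
    (hmk : 2 ≤ m k)
    (ht : ∀ i : ℕ, 1 ≤ i → i ≤ k → t i = (m (i - 1) - m i + 2) / 2)
    (hε : ∀ i : ℕ, 1 ≤ i → i ≤ k →
      ε i = 2 * (t i : ℤ) - 1 - (m (i - 1) : ℤ) + (m i : ℤ))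
    (ha0 : a 0 = 1)
    (ha1 : 1 ≤ k → a 1 = (t 1 : ℤ))
    (ha : ∀ l : ℕ, 1 ≤ l → l ≤ k - 1 →
      a (l + 1) = (t (l + 1) : ℤ) * a l - ε l * a (l - 1)) :
    (R H : ℤ) =
      if 1 ≤ k then a k * ((m k / 2 : ℕ) : ℤ) - ε k * a (k - 1)
      else ((m 0 / 2 : ℕ) : ℤ) := by
  have hgap' : ∀ i < k, m (i + 1) + 2 ≤ m i := fun i hi => hgap (i + 1) (by omega) (by omega)
  have hH : H = zeckTail m k 0 := by rw [hexp, zeckTail, range_eq_Ico]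
  have hlast : zeckTail m k k = fib (m k) := by simp [zeckTail_eq_add le_rfl]
  split_ifs with hk
  · have hr : ∀ ℓ < k, (R (zeckTail m k ℓ) : ℤ) =
        t (ℓ + 1) * R (zeckTail m k (ℓ + 1)) - ε (ℓ + 1) * R (zeckTail m k (ℓ + 2)) :=
      fun ℓ hℓ => by
      rw [R_zeckTail hgap' hmk hℓ, ht (ℓ + 1) (by omega) (by omega),
        hε (ℓ + 1) (by omega) (by omega), ht (ℓ + 1) (by omega) (by omega), Nat.add_sub_cancel]
    obtain ⟨j, rfl⟩ : ∃ j, k = j + 1 := ⟨k - 1, by omega⟩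
    rw [hH, continuant_unfold (r := fun ℓ => (R (zeckTail m (j + 1) ℓ) : ℤ))
      (t := fun i => (t i : ℤ)) hr ha0 ha1 ha j (by omega), hlast, R_fib hmk, zeckTail_succ_self,
      R_zero, Nat.add_sub_cancel]
    ring
  · obtain rfl : k = 0 := by omega
    rw [hH, hlast, R_fib hmk]

/-- Theorem 1 (exact formula for the Fibonacci partition function). -/
theorem fibonacci_partition_exact_formula
    (H k : ℕ) (m t : ℕ → ℕ) (ε a : ℕ → ℤ)
    (hH : 0 < H)
    (hexp : H = ∑ i ∈ Finset.range (k + 1), Nat.fib (m i))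
    (hgap : ∀ i : ℕ, 1 ≤ i → i ≤ k → m i + 2 ≤ m (i - 1))
    (hmk : 2 ≤ m k)
    (ht : ∀ i : ℕ, 1 ≤ i → i ≤ k → t i = (m (i - 1) - m i + 2) / 2)
    (hε : ∀ i : ℕ, 1 ≤ i → i ≤ k →
      ε i = 2 * (t i : ℤ) - 1 - (m (i - 1) : ℤ) + (m i : ℤ))
    (ha0 : a 0 = 1)
    (ha1 : 1 ≤ k → a 1 = (t 1 : ℤ))
    (ha : ∀ l : ℕ, 1 ≤ l → l ≤ k - 1 →
      a (l + 1) = (t (l + 1) : ℤ) * a l - ε l * a (l - 1)) :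
    (R H : ℤ) =
      if 1 ≤ k then a k * ((m k / 2 : ℕ) : ℤ) - ε k * a (k - 1)
      else ((m 0 / 2 : ℕ) : ℤ) :=
  fibonacci_partition_exact_formula_general H k m t ε a hexp hgap hmk ht hε ha0 ha1 ha
end

section
/- (Carlitz) For every integer m ≥ 2, R(F_m) = ⌊m/2⌋. -/
open scoped BigOperators
open Filter Topology

/-!
A partition of `F_{k+4}` into distinct Fibonacci numbers either is the single part `F_{k+4}` or
contains `F_{k+3}`, since `F_2 + ⋯ + F_{k+2} = F_{k+4} - 2` is too small; removing `F_{k+3}` leaves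
a partition of `F_{k+2}`. Hence `R (F_{k+4}) = R (F_{k+2}) + 1`, and `R (F_2) = R (F_3) = 1`.
-/

open Finset

/-- Indices are shifted by two so that `i ↦ F_{i+2}` is injective (`F_1 = F_2`). -/
def fibPartitions (n : ℕ) : Finset (Finset ℕ) :=
  (range n).powerset.filter fun T => ∑ i ∈ T, Nat.fib (i + 2) = n

lemma fib_add_two_injective : Function.Injective fun i => Nat.fib (i + 2) :=
  Nat.fib_add_two_strictMono.injective

lemma fib_add_two_le_sum {T : Finset ℕ} {i : ℕ} (hi : i ∈ T) :
    Nat.fib (i + 2) ≤ ∑ j ∈ T, Nat.fib (j + 2) :=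
  single_le_sum (f := fun j => Nat.fib (j + 2)) (fun _ _ => Nat.zero_le _) hi

lemma mem_fibPartitions {n : ℕ} {T : Finset ℕ} :
    T ∈ fibPartitions n ↔ ∑ i ∈ T, Nat.fib (i + 2) = n := by
  refine ⟨fun h => (mem_filter.1 h).2, fun h => mem_filter.2 ⟨mem_powerset.2 fun i hi => ?_, h⟩⟩
  have := Nat.le_fib_add_one (i + 2)
  have := fib_add_two_le_sum hi
  exact mem_range.2 (by omega)

lemma isFibNum_iff_mem_range {x : ℕ} : IsFibNum x ↔ x ∈ Set.range fun i => Nat.fib (i + 2) := by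
  constructor
  · rintro ⟨_ | _ | m, hm, rfl⟩
    · omega
    · exact ⟨0, rfl⟩
    · exact ⟨m, rfl⟩
  · rintro ⟨i, rfl⟩
    exact ⟨i + 2, by omega, rfl⟩

lemma R_eq_card_fibPartitions (n : ℕ) : R n = #(fibPartitions n) := by
  have hset : {S : Finset ℕ | (∀ x ∈ S, IsFibNum x) ∧ ∑ x ∈ S, x = n} =
      image (fun i => Nat.fib (i + 2)) '' ↑(fibPartitions n) := by
    ext S
    simp only [Set.mem_ofPred_eq, Set.mem_image, mem_coe, mem_fibPartitions]
    constructor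
    · rintro ⟨hfib, rfl⟩
      obtain ⟨T, -, rfl⟩ := (subset_set_image_iff (s := Set.univ)).1 fun x hx => by
        obtain ⟨i, hi⟩ := isFibNum_iff_mem_range.1 (hfib x hx)
        exact ⟨i, trivial, hi⟩
      exact ⟨T, (sum_image (f := fun x => x) fun a _ b _ h => fib_add_two_injective h).symm, rfl⟩
    · rintro ⟨T, rfl, rfl⟩
      refine ⟨fun x hx => ?_, sum_image fun a _ b _ h => fib_add_two_injective h⟩
      obtain ⟨i, -, rfl⟩ := mem_image.1 hx
      exact isFibNum_iff_mem_range.2 ⟨i, rfl⟩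
  calc R n = Set.ncard {S : Finset ℕ | (∀ x ∈ S, IsFibNum x) ∧ ∑ x ∈ S, x = n} :=
        Nat.card_coe_set_eq _
    _ = #(fibPartitions n) := by
        rw [hset, Set.ncard_image_of_injective _ (image_injective fib_add_two_injective),
          Set.ncard_coe_finset]

lemma sum_range_fib_add_two (n : ℕ) : ∑ i ∈ range n, Nat.fib (i + 2) + 2 = Nat.fib (n + 3) := by
  induction n with
  | zero => rfl
  | succ n ih =>
    have hrec : Nat.fib (n + 4) = Nat.fib (n + 2) + Nat.fib (n + 3) := Nat.fib_add_two
    rw [sum_range_succ, show n + 1 + 3 = n + 4 from rfl]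
    omega

lemma le_of_mem_fibPartitions {T : Finset ℕ} {i j : ℕ} (hT : T ∈ fibPartitions (Nat.fib (j + 2)))
    (hi : i ∈ T) : i ≤ j := by
  rw [mem_fibPartitions] at hT
  exact Nat.fib_add_two_strictMono.le_iff_le.1 (hT ▸ fib_add_two_le_sum hi)

lemma mem_fibPartitions_fib_add_four {k : ℕ} {T : Finset ℕ} :
    T ∈ fibPartitions (Nat.fib (k + 4)) ↔
      T = {k + 2} ∨ ∃ T' ∈ fibPartitions (Nat.fib (k + 2)), insert (k + 1) T' = T := by
  have hrec : Nat.fib (k + 4) = Nat.fib (k + 2) + Nat.fib (k + 1 + 2) := Nat.fib_add_two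
  constructor
  · intro hT
    have hle : ∀ i ∈ T, i ≤ k + 2 := fun i hi => le_of_mem_fibPartitions hT hi
    rw [mem_fibPartitions] at hT
    by_cases htop : k + 2 ∈ T
    · left
      have hrest : ∑ i ∈ T.erase (k + 2), Nat.fib (i + 2) = 0 := by
        have : ∑ i ∈ T.erase (k + 2), Nat.fib (i + 2) + Nat.fib (k + 4) = Nat.fib (k + 4) :=
          hT ▸ sum_erase_add T (fun i => Nat.fib (i + 2)) htop
        omega
      have hempty : T.erase (k + 2) = ∅ :=
        eq_empty_of_forall_notMem fun i hi => by
          simpa using sum_eq_zero_iff.1 hrest i hi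
      rw [← insert_erase htop, hempty]
      rfl
    · right
      have hnext : k + 1 ∈ T := by
        by_contra hnext
        have hsub : T ⊆ range (k + 1) := fun i hi => by
          have := hle i hi
          have : i ≠ k + 2 := ne_of_mem_of_not_mem hi htop
          have : i ≠ k + 1 := ne_of_mem_of_not_mem hi hnext
          exact mem_range.2 (by omega)
        have := sum_le_sum_of_subset (f := fun i => Nat.fib (i + 2)) hsub
        have : ∑ i ∈ range (k + 1), Nat.fib (i + 2) + 2 = Nat.fib (k + 4) :=
          sum_range_fib_add_two (k + 1)
        omega
      refine ⟨T.erase (k + 1), mem_fibPartitions.2 ?_, insert_erase hnext⟩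
      have := sum_erase_add T (fun i => Nat.fib (i + 2)) hnext
      omega
  · rintro (rfl | ⟨T', hT', rfl⟩)
    · simp [mem_fibPartitions]
    · have hnotin : k + 1 ∉ T' := fun h => by have := le_of_mem_fibPartitions hT' h; omega
      rw [mem_fibPartitions] at hT' ⊢
      rw [sum_insert hnotin, hT']
      omega

lemma card_fibPartitions_fib_add_four (k : ℕ) :
    #(fibPartitions (Nat.fib (k + 4))) = #(fibPartitions (Nat.fib (k + 2))) + 1 := by
  have hsplit : fibPartitions (Nat.fib (k + 4)) =
      insert {k + 2} ((fibPartitions (Nat.fib (k + 2))).image (insert (k + 1))) := by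
    ext T
    simp only [mem_fibPartitions_fib_add_four, mem_insert, mem_image]
  have hinj : Set.InjOn (insert (k + 1)) ↑(fibPartitions (Nat.fib (k + 2))) :=
    insert_erase_invOn.2.injOn.mono fun T hT h => by
      have := le_of_mem_fibPartitions hT h
      omega
  rw [hsplit, card_insert_of_notMem, card_image_of_injOn hinj]
  simp only [mem_image, not_exists, not_and]
  intro T _ h
  have : k + 1 ∈ ({k + 2} : Finset ℕ) := h ▸ mem_insert_self (k + 1) T
  simp at this

lemma card_fibPartitions_fib : ∀ j : ℕ, #(fibPartitions (Nat.fib (j + 2))) = j / 2 + 1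
  | 0 => by decide
  | 1 => by decide
  | k + 2 => by
    rw [card_fibPartitions_fib_add_four, card_fibPartitions_fib k]
    omega

/-- Carlitz: `R (F_m) = ⌊m/2⌋` for `m ≥ 2`. -/
theorem carlitz_R_fib (m : ℕ) (hm : 2 ≤ m) : R (Nat.fib m) = m / 2 := by
  obtain ⟨j, rfl⟩ := Nat.exists_eq_add_of_le' hm
  rw [R_eq_card_fibPartitions, card_fibPartitions_fib]
  omega
end

section
/- Let H be a positive integer with Zeckendorf expansion H = F_{m_0} + F_{m_1} + ... + F_{m_k} and suppose k ≥ 1. Then for every ℓ with 1 ≤ ℓ ≤ k, R(H) = a_ℓ·R(x_ℓ) − ε_ℓ·a_{ℓ−1}·R(x_{ℓ+1}). -/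
open scoped BigOperators
open Filter Topology

/-!
Write `y = F_{m₁} + x`. A Fibonacci partition of `F_{m₀} + y` only uses parts `F_j` with
`2 ≤ j ≤ m₀`; sort them by whether they contain the largest available part. One that omits
`F_{q+2}` must contain `F_{q+1}`, since `F_2 + ⋯ + F_q < F_{q+2}`, and the rest then sums to
`F_q + y`. So the count `g d` for the gap `d = m₀ - m₁` satisfies `g (d + 2) = g d + R y`, with
`g 0 = R y - R x` and `g 1 = R y`; this is the one-step recursion `R (F_{m₀} + y) = t R y - ε R x`.
Along the Zeckendorf tails `x_ℓ` it unfolds into the three-term recurrence defining `a_ℓ`.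
-/

open Finset

lemma IsFibNum.exists_two_le {y : ℕ} (hy : IsFibNum y) : ∃ j, 2 ≤ j ∧ Nat.fib j = y := by
  obtain ⟨m, hm, rfl⟩ := hy
  rcases Nat.lt_or_ge m 2 with hlt | hge
  · exact ⟨2, le_rfl, by interval_cases m; rfl⟩
  · exact ⟨m, hge, rfl⟩

def fibReps (M n : ℕ) : Finset (Finset ℕ) :=
  (Icc 2 M).powerset.filter fun T => ∑ j ∈ T, Nat.fib j = n

lemma sum_image_fib {M : ℕ} {T : Finset ℕ} (hT : T ⊆ Icc 2 M) :
    ∑ y ∈ T.image Nat.fib, y = ∑ j ∈ T, Nat.fib j :=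
  sum_image fun _ ha _ hb =>
    Nat.fib_strictMonoOn.injOn (mem_Icc.1 (hT ha)).1 (mem_Icc.1 (hT hb)).1

lemma fibReps_image_fib {M n : ℕ} {T : Finset ℕ} (hT : T ∈ fibReps M n) :
    (∀ y ∈ T.image Nat.fib, IsFibNum y) ∧ ∑ y ∈ T.image Nat.fib, y = n := by
  obtain ⟨hsub, hsum⟩ := mem_filter.1 hT
  refine ⟨?_, (sum_image_fib (mem_powerset.1 hsub)).trans hsum⟩
  simp only [mem_image, forall_exists_index, and_imp]
  rintro _ j hj rfl
  exact ⟨j, by linarith [(mem_Icc.1 (mem_powerset.1 hsub hj)).1], rfl⟩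

lemma filter_fib_mem_image {M : ℕ} {T : Finset ℕ} (hT : T ⊆ Icc 2 M) :
    (Icc 2 M).filter (fun j => Nat.fib j ∈ T.image Nat.fib) = T := by
  ext j
  simp only [mem_filter, mem_image]
  constructor
  · rintro ⟨hj, i, hi, hij⟩
    rwa [← Nat.fib_strictMonoOn.injOn (mem_Icc.1 (hT hi)).1 (mem_Icc.1 hj).1 hij]
  · exact fun hj => ⟨hT hj, j, hj, rfl⟩

lemma image_fib_filter_fib_mem {M : ℕ} {S : Finset ℕ} (hS : ∀ y ∈ S, IsFibNum y)
    (hlt : ∑ y ∈ S, y < Nat.fib (M + 1)) :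
    ((Icc 2 M).filter (fun j => Nat.fib j ∈ S)).image Nat.fib = S := by
  ext y
  simp only [mem_image, mem_filter]
  constructor
  · rintro ⟨j, ⟨-, hj⟩, rfl⟩
    exact hj
  · intro hy
    obtain ⟨j, hj, rfl⟩ := (hS y hy).exists_two_le
    have hjM : Nat.fib j < Nat.fib (M + 1) :=
      (single_le_sum (fun _ _ => Nat.zero_le _) hy).trans_lt hlt
    exact ⟨j, ⟨mem_Icc.2 ⟨hj, by have := (Nat.fib_lt_fib hj).1 hjM; omega⟩, hy⟩, rfl⟩

lemma card_fibReps_eq_R {M n : ℕ} (h : n < Nat.fib (M + 1)) : #(fibReps M n) = R n := by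
  rw [R, ← Nat.card_eq_finsetCard]
  refine Nat.card_eq_of_bijective (fun T => ⟨T.1.image Nat.fib, fibReps_image_fib T.2⟩) ⟨?_, ?_⟩
  · rintro ⟨T₁, h₁⟩ ⟨T₂, h₂⟩ himage
    rw [Subtype.mk.injEq, ← filter_fib_mem_image (mem_powerset.1 (mem_filter.1 h₁).1),
      ← filter_fib_mem_image (mem_powerset.1 (mem_filter.1 h₂).1)]
    simp only [Subtype.mk.injEq] at himage
    rw [himage]
  · rintro ⟨S, hfib, hsum⟩
    have himage := image_fib_filter_fib_mem hfib (hsum ▸ h)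
    have hsub := filter_subset (fun j => Nat.fib j ∈ S) (Icc 2 M)
    refine ⟨⟨_, mem_filter.2 ⟨mem_powerset.2 hsub, ?_⟩⟩, Subtype.ext himage⟩
    rw [← sum_image_fib hsub, himage, hsum]

lemma card_fibReps_succ {M : ℕ} (hM : 1 ≤ M) (r : ℕ) :
    #(fibReps (M + 1) (Nat.fib (M + 1) + r)) =
      #(fibReps M (Nat.fib (M + 1) + r)) + #(fibReps M r) := by
  have hnotMem : M + 1 ∉ Icc 2 M := by simp
  simp only [fibReps, card_filter]
  rw [← insert_Icc_right_eq_Icc_add_one (by omega), sum_powerset_insert hnotMem]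
  congr 1
  refine sum_congr rfl fun _ hT => ?_
  rw [sum_insert (notMem_mono (mem_powerset.1 hT) hnotMem)]
  simp only [Nat.add_left_cancel_iff]

lemma sum_fib_lt_of_subset {M : ℕ} {T : Finset ℕ} (hT : T ⊆ Icc 2 M) :
    ∑ j ∈ T, Nat.fib j < Nat.fib (M + 2) := by
  have hrange : T ⊆ range (M + 1) := fun j hj => by
    have := mem_Icc.1 (hT hj); simp; omega
  calc ∑ j ∈ T, Nat.fib j ≤ ∑ j ∈ range (M + 1), Nat.fib j := sum_le_sum_of_subset hrange
    _ < Nat.fib (M + 2) := by rw [Nat.fib_succ_eq_succ_sum]; omega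

lemma fibReps_eq_empty {M n : ℕ} (h : Nat.fib (M + 2) ≤ n) : fibReps M n = ∅ :=
  filter_eq_empty_iff.2 fun _ hT hsum =>
    (sum_fib_lt_of_subset (mem_powerset.1 hT)).not_ge (hsum ▸ h)

lemma card_fibReps_succ_of_le {M r : ℕ} (hM : 1 ≤ M)
    (h : Nat.fib (M + 2) ≤ Nat.fib (M + 1) + r) :
    #(fibReps (M + 1) (Nat.fib (M + 1) + r)) = #(fibReps M r) := by
  rw [card_fibReps_succ hM, fibReps_eq_empty h, card_empty, zero_add]

lemma card_fibReps_add_two {q y : ℕ} (hq : 1 ≤ q) (hy : y < Nat.fib (q + 2)) :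
    #(fibReps (q + 2) (Nat.fib (q + 2) + y)) = #(fibReps q (Nat.fib q + y)) + R y := by
  have hfib : Nat.fib (q + 2) = Nat.fib q + Nat.fib (q + 1) := Nat.fib_add_two
  have hforced : #(fibReps (q + 1) (Nat.fib (q + 1) + (Nat.fib q + y))) =
      #(fibReps q (Nat.fib q + y)) := card_fibReps_succ_of_le hq (by omega)
  rw [card_fibReps_succ (M := q + 1) (by omega) y, card_fibReps_eq_R hy,
    show Nat.fib (q + 1 + 1) + y = Nat.fib (q + 1) + (Nat.fib q + y) by rw [Nat.fib_add_two]; ring,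
    hforced]

lemma card_fibReps_fib_add_fib_add (p x : ℕ) (hx : x < Nat.fib (p + 1)) (d : ℕ) :
    (#(fibReps (p + 2 + d) (Nat.fib (p + 2 + d) + (Nat.fib (p + 2) + x))) : ℤ) =
      ((d + 2) / 2 : ℕ) * R (Nat.fib (p + 2) + x)
        - (2 * ((d + 2) / 2 : ℕ) - 1 - d : ℤ) * R x := by
  generalize hy : Nat.fib (p + 2) + x = y
  have hfib₃ : Nat.fib (p + 3) = Nat.fib (p + 1) + Nat.fib (p + 2) := Nat.fib_add_two
  have hfib₄ : Nat.fib (p + 4) = Nat.fib (p + 2) + Nat.fib (p + 3) := Nat.fib_add_two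
  have hmono : Nat.fib (p + 1) ≤ Nat.fib (p + 2) := Nat.fib_mono (by omega)
  have hRy : #(fibReps (p + 2) y) = R y := card_fibReps_eq_R (show y < Nat.fib (p + 3) by omega)
  induction d using Nat.twoStepInduction with
  | zero =>
    have hsplit : #(fibReps (p + 2) y) = #(fibReps (p + 1) y) + R x := by
      rw [← hy, card_fibReps_succ (by omega), card_fibReps_eq_R (hx.trans_le hmono)]
    rw [add_zero, card_fibReps_succ_of_le (M := p + 1) (by omega)
      (show Nat.fib (p + 3) ≤ Nat.fib (p + 2) + y by omega)]
    push_cast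
    omega
  | one =>
    rw [show p + 2 + 1 = p + 3 by ring, card_fibReps_succ_of_le (M := p + 2) (by omega)
      (show Nat.fib (p + 4) ≤ Nat.fib (p + 3) + y by omega), hRy]
    push_cast
    ring
  | more d ih _ =>
    have hyd : y < Nat.fib (p + 2 + d + 2) :=
      (show y < Nat.fib (p + 3) by omega).trans_le (Nat.fib_mono (by omega))
    have hhalf : (d + 2 + 2) / 2 = (d + 2) / 2 + 1 := by omega
    rw [show p + 2 + (d + 2) = p + 2 + d + 2 by ring, card_fibReps_add_two (by omega) hyd,
      Nat.cast_add, ih, hhalf]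
    push_cast
    ring

theorem R_fib_add_fib_add {m₀ m₁ x : ℕ} (h₁ : 2 ≤ m₁) (h₀₁ : m₁ + 2 ≤ m₀)
    (hx : x < Nat.fib (m₁ - 1)) :
    (R (Nat.fib m₀ + (Nat.fib m₁ + x)) : ℤ) =
      ((m₀ - m₁ + 2) / 2 : ℕ) * R (Nat.fib m₁ + x)
        - (2 * ((m₀ - m₁ + 2) / 2 : ℕ) - 1 - m₀ + m₁ : ℤ) * R x := by
  obtain ⟨p, rfl⟩ : ∃ p, m₁ = p + 2 := ⟨m₁ - 2, by omega⟩
  obtain ⟨d, rfl⟩ : ∃ d, m₀ = p + 2 + d := ⟨m₀ - (p + 2), by omega⟩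
  replace hx : x < Nat.fib (p + 1) := hx
  have hfib₃ : Nat.fib (p + 3) = Nat.fib (p + 1) + Nat.fib (p + 2) := Nat.fib_add_two
  have hfib : Nat.fib (p + 2 + d + 1) = Nat.fib (p + 1 + d) + Nat.fib (p + 2 + d) := by
    rw [show p + 2 + d + 1 = p + 1 + d + 2 by ring, Nat.fib_add_two]; ring_nf
  have hmono : Nat.fib (p + 3) ≤ Nat.fib (p + 1 + d) := Nat.fib_mono (by omega)
  rw [← card_fibReps_eq_R (M := p + 2 + d) (by omega), card_fibReps_fib_add_fib_add p x hx d,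
    Nat.add_sub_cancel_left]
  push_cast
  ring

lemma three_term_recurrence_unfold {k : ℕ} {r t ε a : ℕ → ℤ}
    (hr : ∀ j, j + 1 ≤ k → r j = t (j + 1) * r (j + 1) - ε (j + 1) * r (j + 2))
    (ha0 : a 0 = 1) (ha1 : a 1 = t 1)
    (ha : ∀ l, 1 ≤ l → l ≤ k - 1 → a (l + 1) = t (l + 1) * a l - ε l * a (l - 1)) :
    ∀ l, 1 ≤ l → l ≤ k → r 0 = a l * r l - ε l * a (l - 1) * r (l + 1) := by
  intro l hl hlk
  induction l, hl using Nat.le_induction with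
  | base => rw [hr 0 (by omega), ha1, Nat.sub_self, ha0]; ring
  | succ l hl ih =>
    rw [ih (by omega), hr l (by omega), ha l hl (by omega), Nat.add_sub_cancel]
    ring

lemma two_le_of_gap {k : ℕ} {m : ℕ → ℕ} (hgap : ∀ i, 1 ≤ i → i ≤ k → m i + 2 ≤ m (i - 1))
    (hmk : 2 ≤ m k) {j : ℕ} (hj : j ≤ k) : 2 ≤ m j := by
  induction hj using Nat.decreasingInduction with
  | self => exact hmk
  | of_succ j hj ih =>
    have hgapj : m (j + 1) + 2 ≤ m j := hgap (j + 1) (by omega) hj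
    omega

lemma lt_fib_of_gap {k : ℕ} {m x : ℕ → ℕ} (hgap : ∀ i, 1 ≤ i → i ≤ k → m i + 2 ≤ m (i - 1))
    (hmk : 2 ≤ m k) (hxs : ∀ j ≤ k, x j = Nat.fib (m j) + x (j + 1)) (hxk : x (k + 1) = 0)
    {j : ℕ} (hj : j ≤ k) : x (j + 1) < Nat.fib (m j - 1) := by
  induction hj using Nat.decreasingInduction with
  | self => rw [hxk, Nat.fib_pos]; omega
  | of_succ j hj ih =>
    have hgapj : m (j + 1) + 2 ≤ m j := hgap (j + 1) (by omega) hj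
    have h2 : 2 ≤ m (j + 1) := two_le_of_gap hgap hmk hj
    replace ih : x (j + 2) < Nat.fib (m (j + 1) - 1) := ih
    have hfib : Nat.fib (m (j + 1) + 1) = Nat.fib (m (j + 1) - 1) + Nat.fib (m (j + 1)) :=
      Nat.fib_add_one (by omega)
    calc x (j + 1) = Nat.fib (m (j + 1)) + x (j + 2) := hxs (j + 1) hj
      _ < Nat.fib (m (j + 1) + 1) := by omega
      _ ≤ Nat.fib (m j - 1) := Nat.fib_mono (by omega)

theorem iterated_robbins_recursion_general
    (H k : ℕ) (m x t : ℕ → ℕ) (ε a : ℕ → ℤ)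
    (hexp : H = ∑ i ∈ Finset.range (k + 1), Nat.fib (m i))
    (hgap : ∀ i : ℕ, 1 ≤ i → i ≤ k → m i + 2 ≤ m (i - 1))
    (hmk : 2 ≤ m k)
    (hx : ∀ l : ℕ, l ≤ k + 1 → x l = ∑ i ∈ Finset.Icc l k, Nat.fib (m i))
    (ht : ∀ i : ℕ, 1 ≤ i → i ≤ k → t i = (m (i - 1) - m i + 2) / 2)
    (hε : ∀ i : ℕ, 1 ≤ i → i ≤ k →
      ε i = 2 * (t i : ℤ) - 1 - (m (i - 1) : ℤ) + (m i : ℤ))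
    (ha0 : a 0 = 1)
    (ha1 : a 1 = (t 1 : ℤ))
    (ha : ∀ l : ℕ, 1 ≤ l → l ≤ k - 1 →
      a (l + 1) = (t (l + 1) : ℤ) * a l - ε l * a (l - 1)) :
    ∀ l : ℕ, 1 ≤ l → l ≤ k →
      (R H : ℤ) = a l * (R (x l) : ℤ) - ε l * a (l - 1) * (R (x (l + 1)) : ℤ) := by
  have hxs : ∀ j ≤ k, x j = Nat.fib (m j) + x (j + 1) := fun j hj => by
    rw [hx j (by omega), hx (j + 1) (by omega), ← insert_Icc_add_one_left_eq_Icc hj,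
      sum_insert (by simp)]
  have hxk : x (k + 1) = 0 := by simp [hx (k + 1) le_rfl]
  obtain rfl : H = x 0 := by rw [hexp, hx 0 (by omega), range_eq_Ico, Ico_add_one_right_eq_Icc]
  refine three_term_recurrence_unfold (r := fun j => (R (x j) : ℤ)) (t := fun i => (t i : ℤ))
    (fun j hj => ?_) ha0 ha1 ha
  have hgapj : m (j + 1) + 2 ≤ m j := hgap (j + 1) (by omega) hj
  rw [hxs j (by omega), hxs (j + 1) hj, R_fib_add_fib_add (two_le_of_gap hgap hmk hj) hgapj
    (lt_fib_of_gap hgap hmk hxs hxk (j := j + 1) hj), hε (j + 1) (by omega) hj,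
    ht (j + 1) (by omega) hj, Nat.add_sub_cancel]

/-- Iterated Robbins recursion: `R(H) = a_ℓ R(x_ℓ) - ε_ℓ a_{ℓ-1} R(x_{ℓ+1})` for `1 ≤ ℓ ≤ k`. -/
theorem iterated_robbins_recursion
    (H k : ℕ) (m x t : ℕ → ℕ) (ε a : ℕ → ℤ)
    (hH : 0 < H) (hk : 1 ≤ k)
    (hexp : H = ∑ i ∈ Finset.range (k + 1), Nat.fib (m i))
    (hgap : ∀ i : ℕ, 1 ≤ i → i ≤ k → m i + 2 ≤ m (i - 1))
    (hmk : 2 ≤ m k)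
    (hx : ∀ l : ℕ, l ≤ k + 1 → x l = ∑ i ∈ Finset.Icc l k, Nat.fib (m i))
    (ht : ∀ i : ℕ, 1 ≤ i → i ≤ k → t i = (m (i - 1) - m i + 2) / 2)
    (hε : ∀ i : ℕ, 1 ≤ i → i ≤ k →
      ε i = 2 * (t i : ℤ) - 1 - (m (i - 1) : ℤ) + (m i : ℤ))
    (ha0 : a 0 = 1)
    (ha1 : a 1 = (t 1 : ℤ))
    (ha : ∀ l : ℕ, 1 ≤ l → l ≤ k - 1 →
      a (l + 1) = (t (l + 1) : ℤ) * a l - ε l * a (l - 1)) :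
    ∀ l : ℕ, 1 ≤ l → l ≤ k →
      (R H : ℤ) = a l * (R (x l) : ℤ) - ε l * a (l - 1) * (R (x (l + 1)) : ℤ) :=
  iterated_robbins_recursion_general H k m x t ε a hexp hgap hmk hx ht hε ha0 ha1 ha
end

section
/- If m ≥ 3 is an integer and H is an integer with F_m ≤ H < F_{m+1}, then A(H) = A(H − F_m) + A(H − F_{m−1}) − A(H − 2F_{m−1}) + 2^{m−3}. -/
open scoped BigOperators
open Filter Topology

/-- The summatory function extended to integer arguments: `A H = ∑_{n=0}^{H} R n`
for `H ≥ 0`, and `A H = 0` for `H < 0`. -/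
noncomputable def AZ (H : ℤ) : ℤ :=
  if H < 0 then 0 else ∑ n ∈ Finset.range (H.toNat + 1), (R n : ℤ)

/-!
Write `c_k(X)` for the number of subsets of `{F_2, …, F_{k+1}}` with sum at most `X`. A set of
distinct Fibonacci numbers with sum at most `H < F_{k+2}` lies in `{F_2, …, F_{k+1}}`, so
`A(H) = c_k(H)`. Splitting off the largest element gives `c_{k+1}(X) = c_k(X) + c_k(X - F_{k+2})`,
and since `c_k(X) = 0` for `X < 0` this needs no case distinction. For `F_m ≤ H < F_{m+1}`,
expanding `A(H) = c_{m-1}(H)` twice and `A(H - F_{m-1}) = c_{m-2}(H - F_{m-1})` once leaves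
`c_{m-3}(H)`, which is `2^{m-3}` because `F_2 + ⋯ + F_{m-2} = F_m - 2 < H`.
-/

open Finset

def smallFibs (k : ℕ) : Finset ℕ := (range k).image fun i => Nat.fib (i + 2)

lemma smallFibs_succ (k : ℕ) :
    smallFibs (k + 1) = insert (Nat.fib (k + 2)) (smallFibs k) := by
  rw [smallFibs, range_add_one, image_insert, smallFibs]

lemma fib_notMem_smallFibs (k : ℕ) : Nat.fib (k + 2) ∉ smallFibs k := by
  simp [smallFibs, Nat.fib_add_two_strictMono.injective.eq_iff]

lemma card_smallFibs (k : ℕ) : #(smallFibs k) = k := by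
  rw [smallFibs, card_image_of_injective _ Nat.fib_add_two_strictMono.injective, card_range]

lemma sum_smallFibs (k : ℕ) : ∑ x ∈ smallFibs k, x + 2 = Nat.fib (k + 3) := by
  induction k with
  | zero => rfl
  | succ k ih =>
    have hfib : Nat.fib (k + 4) = Nat.fib (k + 2) + Nat.fib (k + 3) := Nat.fib_add_two
    rw [smallFibs_succ, sum_insert (fib_notMem_smallFibs k)]
    show _ = Nat.fib (k + 4)
    omega

lemma mem_smallFibs {k x : ℕ} : x ∈ smallFibs k ↔ IsFibNum x ∧ x < Nat.fib (k + 2) := by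
  simp only [smallFibs, mem_image, mem_range]
  constructor
  · rintro ⟨i, hi, rfl⟩
    exact ⟨⟨i + 2, by omega, rfl⟩, Nat.fib_add_two_strictMono hi⟩
  · rintro ⟨⟨j, hj, rfl⟩, hlt⟩
    have hfib : Nat.fib (j - 2 + 2) = Nat.fib j := by
      obtain rfl | hj : j = 1 ∨ 2 ≤ j := by omega
      · rfl
      · rw [Nat.sub_add_cancel hj]
    rw [← hfib] at hlt ⊢
    exact ⟨j - 2, Nat.fib_add_two_strictMono.lt_iff_lt.1 hlt, rfl⟩

/-- The threshold is an integer so that negative thresholds, as in `AZ`, count no subsets. -/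
def numSubsetsSumLE (V : Finset ℕ) (X : ℤ) : ℕ :=
  #{S ∈ V.powerset | ((∑ x ∈ S, x : ℕ) : ℤ) ≤ X}

lemma numSubsetsSumLE_of_neg (V : Finset ℕ) {X : ℤ} (hX : X < 0) : numSubsetsSumLE V X = 0 := by
  rw [numSubsetsSumLE, card_eq_zero, filter_eq_empty_iff]
  intro S _
  omega

lemma numSubsetsSumLE_of_sum_le {V : Finset ℕ} {X : ℤ}
    (hV : ((∑ x ∈ V, x : ℕ) : ℤ) ≤ X) :
    numSubsetsSumLE V X = 2 ^ #V := by
  rw [numSubsetsSumLE, filter_true_of_mem, card_powerset]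
  intro S hS
  have : ∑ x ∈ S, x ≤ ∑ x ∈ V, x := sum_le_sum_of_subset (mem_powerset.1 hS)
  omega

lemma numSubsetsSumLE_insert {a : ℕ} {V : Finset ℕ} (ha : a ∉ V) (X : ℤ) :
    numSubsetsSumLE (insert a V) X = numSubsetsSumLE V X + numSubsetsSumLE V (X - a) := by
  simp only [numSubsetsSumLE, card_filter, sum_powerset_insert ha]
  congr 1
  refine sum_congr rfl fun S hS => ?_
  have haS : a ∉ S := fun h => ha (mem_powerset.1 hS h)
  simp only [sum_insert haS, Nat.cast_add, le_sub_iff_add_le']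

lemma numSubsetsSumLE_smallFibs_succ (k : ℕ) (X : ℤ) :
    numSubsetsSumLE (smallFibs (k + 1)) X
      = numSubsetsSumLE (smallFibs k) X + numSubsetsSumLE (smallFibs k) (X - Nat.fib (k + 2)) := by
  rw [smallFibs_succ, numSubsetsSumLE_insert (fib_notMem_smallFibs k)]

lemma numSubsetsSumLE_smallFibs_of_le {k : ℕ} {X : ℤ} (hX : (Nat.fib (k + 3) : ℤ) ≤ X + 2) :
    numSubsetsSumLE (smallFibs k) X = 2 ^ k := by
  have := sum_smallFibs k
  rw [numSubsetsSumLE_of_sum_le (by omega), card_smallFibs]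

lemma R_eq_card {k n : ℕ} (hn : n < Nat.fib (k + 2)) :
    R n = #{S ∈ (smallFibs k).powerset | ∑ x ∈ S, x = n} := by
  rw [R, ← Nat.card_eq_finsetCard]
  refine Nat.card_congr (Equiv.subtypeEquivRight fun S => ?_)
  simp only [mem_filter, mem_powerset, subset_iff, mem_smallFibs]
  constructor
  · rintro ⟨hfib, hsum⟩
    refine ⟨fun x hx => ⟨hfib x hx, ?_⟩, hsum⟩
    have := single_le_sum (fun y _ => Nat.zero_le y) hx
    omega
  · rintro ⟨hS, hsum⟩
    exact ⟨fun x hx => (hS hx).1, hsum⟩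

lemma A_eq_numSubsetsSumLE {k H : ℕ} (hH : H < Nat.fib (k + 2)) :
    A H = numSubsetsSumLE (smallFibs k) H := by
  rw [numSubsetsSumLE,
    card_eq_sum_card_fiberwise (f := fun S => ∑ x ∈ S, x) (t := range (H + 1))]
  · refine sum_congr rfl fun n hn => ?_
    rw [mem_range] at hn
    rw [R_eq_card (k := k) (by omega), filter_filter]
    congr 1
    refine filter_congr fun S _ => ?_
    constructor
    · rintro rfl; exact ⟨by omega, rfl⟩
    · exact fun h => h.2
  · intro S hS
    simp only [coe_filter, Set.mem_ofPred_eq] at hS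
    simp only [coe_range, Set.mem_Iio]
    omega

lemma AZ_eq_numSubsetsSumLE {k : ℕ} {H : ℤ} (hH : H < Nat.fib (k + 2)) :
    AZ H = numSubsetsSumLE (smallFibs k) H := by
  rcases lt_or_ge H 0 with hneg | hnonneg
  · rw [AZ, if_pos hneg, numSubsetsSumLE_of_neg _ hneg, Nat.cast_zero]
  · lift H to ℕ using hnonneg
    rw [AZ, if_neg (by omega), Int.toNat_natCast, ← A_eq_numSubsetsSumLE (by omega), A,
      Nat.cast_sum]

/-- The key combinatorial recursion for the summatory function. -/
theorem summatory_key_recursion (m : ℕ) (hm : 3 ≤ m) (H : ℤ)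
    (h1 : (Nat.fib m : ℤ) ≤ H) (h2 : H < (Nat.fib (m + 1) : ℤ)) :
    AZ H = AZ (H - (Nat.fib m : ℤ)) + AZ (H - (Nat.fib (m - 1) : ℤ))
      - AZ (H - 2 * (Nat.fib (m - 1) : ℤ)) + 2 ^ (m - 3) := by
  obtain ⟨n, rfl⟩ : ∃ n, m = n + 3 := ⟨m - 3, by omega⟩
  simp only [Nat.add_sub_cancel, show n + 3 - 1 = n + 2 from rfl, add_assoc, Nat.reduceAdd]
    at h2 ⊢
  have hF4 : Nat.fib (n + 4) = Nat.fib (n + 2) + Nat.fib (n + 3) := Nat.fib_add_two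
  have hF3 : Nat.fib (n + 3) = Nat.fib (n + 1) + Nat.fib (n + 2) := Nat.fib_add_two
  have hF12 : Nat.fib (n + 1) ≤ Nat.fib (n + 2) := Nat.fib_le_fib_succ
  have hH : AZ H = numSubsetsSumLE (smallFibs (n + 1)) H
      + numSubsetsSumLE (smallFibs (n + 1)) (H - Nat.fib (n + 3)) := by
    rw [AZ_eq_numSubsetsSumLE (k := n + 2) h2, numSubsetsSumLE_smallFibs_succ, Nat.cast_add]
  have hHa : AZ (H - Nat.fib (n + 3))
      = numSubsetsSumLE (smallFibs (n + 1)) (H - Nat.fib (n + 3)) :=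
    AZ_eq_numSubsetsSumLE (by simp only [add_assoc, Nat.reduceAdd]; omega)
  have hHb : AZ (H - Nat.fib (n + 2)) = numSubsetsSumLE (smallFibs n) (H - Nat.fib (n + 2))
      + numSubsetsSumLE (smallFibs n) (H - 2 * Nat.fib (n + 2)) := by
    rw [AZ_eq_numSubsetsSumLE (k := n + 1) (by simp only [add_assoc, Nat.reduceAdd]; omega),
      numSubsetsSumLE_smallFibs_succ, sub_sub, ← two_mul, Nat.cast_add]
  have hHc : AZ (H - 2 * Nat.fib (n + 2))
      = numSubsetsSumLE (smallFibs n) (H - 2 * Nat.fib (n + 2)) :=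
    AZ_eq_numSubsetsSumLE (by omega)
  have hall : numSubsetsSumLE (smallFibs n) H = 2 ^ n :=
    numSubsetsSumLE_smallFibs_of_le (by omega)
  rw [hH, hHa, hHb, hHc, numSubsetsSumLE_smallFibs_succ, hall]
  push_cast
  ring
end

section
/- For every integer m ≥ 2, A(F_m) = ⌊2^m/6 + (m+1)/2⌋. -/
open scoped BigOperators
open Filter Topology

/-! A finite set of Fibonacci numbers with sum at most `F m` is `fib '' T` for a unique
`T ⊆ [2, m]` (since `F 1 = F 2` and `fib` is injective on `[2, ∞)`), so `A (F m) = c m`, the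
number of `T ⊆ [2, m]` with `∑_{i ∈ T} F i ≤ F m`. Split such `T` according to `m` and `m - 1`:
`{m}` is the only one containing `m`; removing `m - 1` identifies those containing `m - 1` but
not `m` with the sets counted by `c (m - 2)`, because `F m - F (m - 1) = F (m - 2)`; and every
subset of `[2, m - 2]` qualifies, as `F 2 + ⋯ + F (m - 2) < F m`. Hence
`c m = c (m - 2) + 2 ^ (m - 3) + 1`, which gives `6 c m = 2 ^ m + 3 m + 2 - (m mod 2)`. -/

open Finset Nat

theorem Finset.card_filter_powerset_insert {α : Type*} [DecidableEq α] {s : Finset α} {a : α}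
    (p : Finset α → Prop) [DecidablePred p] (ha : a ∉ s) :
    #{T ∈ (insert a s).powerset | p T} =
      #{T ∈ s.powerset | p T} + #{T ∈ s.powerset | p (insert a T)} := by
  simp only [card_filter]
  exact sum_powerset_insert ha _

theorem Finset.injOn_image_powerset {α β : Type*} [DecidableEq β] {f : α → β} {s : Finset α}
    (hf : Set.InjOn f s) : Set.InjOn (image f) (s.powerset : Set (Finset α)) := by
  intro T hT T' hT' h
  rw [← coe_inj] at h ⊢
  push_cast at h
  exact (hf.image_eq_image_iff (by simpa using hT) (by simpa using hT')).1 h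

theorem Finset.card_filter_le_eq_sum_card_filter_eq {ι : Type*} (s : Finset ι) (f : ι → ℕ)
    (H : ℕ) :
    #{a ∈ s | f a ≤ H} = ∑ n ∈ range (H + 1), #{a ∈ s | f a = n} := by
  rw [card_eq_sum_card_fiberwise (f := f) (t := range (H + 1))
    fun a ha => mem_range.2 (Nat.lt_succ_of_le (mem_filter.1 ha).2)]
  refine sum_congr rfl fun n hn => ?_
  rw [filter_filter]
  exact congrArg card <| filter_congr fun a _ =>
    and_iff_right_of_imp fun h => h ▸ Nat.lt_succ_iff.1 (mem_range.1 hn)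

def fibSumCount (s : Finset ℕ) (b : ℕ) : ℕ := #{T ∈ s.powerset | ∑ i ∈ T, fib i ≤ b}

theorem fibSumCount_insert {s : Finset ℕ} {a b : ℕ} (ha : a ∉ s) (hb : fib a ≤ b) :
    fibSumCount (insert a s) b = fibSumCount s b + fibSumCount s (b - fib a) := by
  rw [fibSumCount, card_filter_powerset_insert _ ha]
  congr 2
  refine filter_congr fun T hT => ?_
  rw [sum_insert fun h => ha (mem_powerset.1 hT h)]
  omega

theorem fibSumCount_zero {s : Finset ℕ} (h0 : 0 ∉ s) : fibSumCount s 0 = 1 := by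
  rw [fibSumCount, card_eq_one]
  refine ⟨∅, ?_⟩
  ext T
  simp only [mem_filter, mem_powerset, nonpos_iff_eq_zero, sum_eq_zero_iff, fib_eq_zero,
    mem_singleton]
  constructor
  · rintro ⟨hT, h⟩
    exact eq_empty_of_forall_notMem fun i hi => h0 (h i hi ▸ hT hi)
  · rintro rfl
    simp

theorem fibSumCount_of_sum_le {s : Finset ℕ} {b : ℕ} (h : ∑ i ∈ s, fib i ≤ b) :
    fibSumCount s b = 2 ^ #s := by
  rw [fibSumCount, filter_true_of_mem, card_powerset]
  exact fun T hT => (sum_le_sum_of_subset (mem_powerset.1 hT)).trans h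

theorem sum_fib_Icc_two_le (n : ℕ) : ∑ i ∈ Icc 2 n, fib i ≤ fib (n + 2) := by
  calc ∑ i ∈ Icc 2 n, fib i ≤ ∑ i ∈ range (n + 1), fib i :=
        sum_le_sum_of_subset fun i hi => mem_range.2 (Nat.lt_succ_of_le (mem_Icc.1 hi).2)
    _ ≤ fib (n + 2) := by rw [fib_succ_eq_succ_sum (n + 1)]; omega

theorem fibSumCount_Icc_add_four (k : ℕ) :
    fibSumCount (Icc 2 (k + 4)) (fib (k + 4)) =
      fibSumCount (Icc 2 (k + 2)) (fib (k + 2)) + 2 ^ (k + 1) + 1 := by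
  have h3 : insert (k + 3) (Icc 2 (k + 2)) = Icc 2 (k + 3) :=
    insert_Icc_right_eq_Icc_add_one (by omega)
  have h4 : insert (k + 4) (Icc 2 (k + 3)) = Icc 2 (k + 4) :=
    insert_Icc_right_eq_Icc_add_one (by omega)
  have hdiff : fib (k + 4) - fib (k + 3) = fib (k + 2) := fib_add_two_sub_fib_add_one
  rw [← h4, fibSumCount_insert (by simp) le_rfl, Nat.sub_self, fibSumCount_zero (by simp), ← h3,
    fibSumCount_insert (by simp) (fib_mono (by omega)), hdiff,
    fibSumCount_of_sum_le (sum_fib_Icc_two_le (k + 2)), card_Icc,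
    show k + 2 + 1 - 2 = k + 1 by omega]
  ring

theorem six_mul_fibSumCount_Icc {m : ℕ} (hm : 2 ≤ m) :
    6 * fibSumCount (Icc 2 m) (fib m) + m % 2 + 1 = 2 ^ m + 3 * m + 3 := by
  obtain ⟨n, rfl⟩ : ∃ n, m = n + 2 := ⟨m - 2, by omega⟩
  induction n using Nat.twoStepInduction with
  | zero => decide
  | one => decide
  | more n ih _ =>
    show 6 * fibSumCount (Icc 2 (n + 4)) (fib (n + 4)) + (n + 4) % 2 + 1 =
      2 ^ (n + 4) + 3 * (n + 4) + 3
    rw [fibSumCount_Icc_add_four]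
    have h2 : 2 ^ (n + 2) = 2 * 2 ^ (n + 1) := by ring
    have h4 : 2 ^ (n + 4) = 8 * 2 ^ (n + 1) := by ring
    omega

theorem isFibNum_iff_mem_image_Icc {m x : ℕ} (hm : 2 ≤ m) (hx : x ≤ fib m) :
    IsFibNum x ↔ x ∈ (Icc 2 m).image fib := by
  constructor
  · rintro ⟨k, hk, rfl⟩
    have hfib : fib (max k 2) = fib k := by
      rcases Nat.lt_or_ge k 2 with h | h
      · obtain rfl : k = 1 := by omega
        rfl
      · rw [max_eq_left h]
    have hle : max k 2 ≤ m := by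
      by_contra! h
      have := (fib_lt_fib hm).2 h
      omega
    exact mem_image.2 ⟨max k 2, mem_Icc.2 ⟨le_max_right _ _, hle⟩, hfib⟩
  · intro hx
    obtain ⟨i, hi, rfl⟩ := mem_image.1 hx
    exact ⟨i, by simp only [mem_Icc] at hi; omega, rfl⟩

theorem R_eq_card_filter_powerset {m n : ℕ} (hm : 2 ≤ m) (hn : n ≤ fib m) :
    R n = #{S ∈ ((Icc 2 m).image fib).powerset | ∑ x ∈ S, x = n} := by
  rw [R, ← Nat.card_eq_finsetCard]
  refine Nat.card_congr (Equiv.subtypeEquivRight fun S => ?_)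
  have hle : ∀ x ∈ S, ∑ y ∈ S, y = n → x ≤ fib m := fun x hx hS =>
    hS ▸ single_le_sum (fun y _ => Nat.zero_le y) hx |>.trans hn
  simp only [mem_filter, mem_powerset]
  constructor
  · rintro ⟨hfib, hS⟩
    exact ⟨fun x hx => (isFibNum_iff_mem_image_Icc hm (hle x hx hS)).1 (hfib x hx), hS⟩
  · rintro ⟨hsub, hS⟩
    exact ⟨fun x hx => (isFibNum_iff_mem_image_Icc hm (hle x hx hS)).2 (hsub hx), hS⟩

theorem card_filter_powerset_image_fib {s : Finset ℕ} (hs : ∀ i ∈ s, 2 ≤ i) (b : ℕ) :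
    #{S ∈ (s.image fib).powerset | ∑ x ∈ S, x ≤ b} = fibSumCount s b := by
  have hinj : Set.InjOn fib s := fib_strictMonoOn.injOn.mono fun i hi => hs i hi
  rw [powerset_image, filter_image, Finset.card_image_of_injOn
    ((injOn_image_powerset hinj).mono (coe_subset.2 (filter_subset _ _))), fibSumCount]
  congr 1
  exact filter_congr fun T hT => by rw [sum_image (hinj.mono (by simpa using hT))]

theorem A_fib_eq_fibSumCount {m : ℕ} (hm : 2 ≤ m) :
    A (fib m) = fibSumCount (Icc 2 m) (fib m) := by
  calc A (fib m)
      = ∑ n ∈ range (fib m + 1), #{S ∈ ((Icc 2 m).image fib).powerset | ∑ x ∈ S, x = n} :=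
        sum_congr rfl fun n hn => R_eq_card_filter_powerset hm (by simp at hn; omega)
    _ = #{S ∈ ((Icc 2 m).image fib).powerset | ∑ x ∈ S, x ≤ fib m} :=
        (card_filter_le_eq_sum_card_filter_eq _ _ _).symm
    _ = fibSumCount (Icc 2 m) (fib m) :=
        card_filter_powerset_image_fib (fun i hi => (mem_Icc.1 hi).1) _

/-- `A(F_m) = ⌊2^m/6 + (m+1)/2⌋` for `m ≥ 2`. -/
theorem summatory_at_fib (m : ℕ) (hm : 2 ≤ m) :
    (A (Nat.fib m) : ℤ) = ⌊(2 ^ m : ℚ) / 6 + ((m : ℚ) + 1) / 2⌋ := by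
  have key : 6 * (fibSumCount (Icc 2 m) (fib m) : ℚ) + ((m % 2 : ℕ) : ℚ) + 1 =
      2 ^ m + 3 * m + 3 := by
    exact_mod_cast six_mul_fibSumCount_Icc hm
  have hpar : ((m % 2 : ℕ) : ℚ) < 2 := by exact_mod_cast Nat.mod_lt m two_pos
  rw [A_fib_eq_fibSumCount hm, eq_comm, Int.floor_eq_iff]
  push_cast
  constructor <;> linarith [(m % 2 : ℕ).cast_nonneg (α := ℚ)]
end

section
/- With c = (√5)^λ/6, one has c/2 ≤ liminf_{H→∞} A(H)/H^λ ≤ limsup_{H→∞} A(H)/H^λ ≤ 2c; in particular A(H) ≍ H^λ. -/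
/-
Let `W(B) = fibSubsetsBelow B` be the family of sets of distinct Fibonacci numbers with
sum `< B`, so that `A(H) = #W(H + 1)`. Splitting `W(F (k + 3))` according to whether
`F (k + 2)` is used gives `#W(F (k + 3)) = 2 ^ k + #W(F (k + 1))`: removing `F (k + 2)` leaves a
set in `W(F (k + 1))`, and otherwise the set is any subset of `{F 2, …, F (k + 1)}`, whose total
sum is `F (k + 3) - 2`. Hence `6 #W(F n) = 2 ^ n + 3 ± 1`. If `F m ≤ H + 1 < F (m + 1)`, then
`A(H)` lies between `#W(F m)` and `#W(F (m + 1))` and `H` between `F m - 1` and `F (m + 1)`;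
since `F m ~ φ ^ m / √5` and `φ ^ λ = 2`, the resulting bounds on `A(H) / H ^ λ` tend to
`c / 2` and `2c`.
-/

open scoped BigOperators
open Filter Topology

open Finset

lemma IsFibNum.pos {x : ℕ} (h : IsFibNum x) : 0 < x := by
  obtain ⟨m, hm, rfl⟩ := h
  exact Nat.fib_pos.2 hm

lemma isFibNum_fib {n : ℕ} (hn : 0 < n) : IsFibNum (Nat.fib n) := ⟨n, hn, rfl⟩

lemma IsFibNum.le_fib_of_lt_fib_succ {x n : ℕ} (hx : IsFibNum x) (hlt : x < Nat.fib (n + 1)) :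
    x ≤ Nat.fib n := by
  obtain ⟨t, -, rfl⟩ := hx
  exact Nat.fib_mono (Nat.lt_succ_iff.1 (Nat.fib_mono.reflect_lt hlt))

lemma le_sum_of_mem {S : Finset ℕ} {x : ℕ} (hx : x ∈ S) : x ≤ ∑ y ∈ S, y :=
  single_le_sum (f := id) (fun _ _ => Nat.zero_le _) hx

open Classical in
noncomputable def fibsBelow (B : ℕ) : Finset ℕ := (range B).filter IsFibNum

lemma mem_fibsBelow {B x : ℕ} : x ∈ fibsBelow B ↔ IsFibNum x ∧ x < B := by
  simp [fibsBelow, and_comm]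

lemma fibsBelow_one : fibsBelow 1 = ∅ :=
  eq_empty_of_forall_notMem fun _ hx => by
    obtain ⟨hx, hlt⟩ := mem_fibsBelow.1 hx
    exact hlt.not_ge hx.pos

lemma fibsBelow_fib_succ {n : ℕ} (hn : 2 ≤ n) :
    fibsBelow (Nat.fib (n + 1)) = insert (Nat.fib n) (fibsBelow (Nat.fib n)) := by
  ext x
  simp only [mem_insert, mem_fibsBelow]
  constructor
  · rintro ⟨hx, hlt⟩
    exact (hx.le_fib_of_lt_fib_succ hlt).eq_or_lt.imp id (⟨hx, ·⟩)
  · rintro (rfl | ⟨hx, hlt⟩)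
    · exact ⟨isFibNum_fib (by omega), Nat.fib_lt_fib_succ hn⟩
    · exact ⟨hx, hlt.trans_le Nat.fib_le_fib_succ⟩

lemma card_fibsBelow_fib_add_two_and_sum (k : ℕ) :
    #(fibsBelow (Nat.fib (k + 2))) = k ∧
      (∑ x ∈ fibsBelow (Nat.fib (k + 2)), x) + 2 = Nat.fib (k + 3) := by
  induction k with
  | zero => simp [fibsBelow_one, Nat.fib_add_two]
  | succ k ih =>
    have hnot : Nat.fib (k + 2) ∉ fibsBelow (Nat.fib (k + 2)) :=
      fun h => (mem_fibsBelow.1 h).2.false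
    rw [fibsBelow_fib_succ (by omega), card_insert_of_notMem hnot, sum_insert hnot,
      show Nat.fib (k + 4) = Nat.fib (k + 2) + Nat.fib (k + 3) from Nat.fib_add_two]
    omega

noncomputable def fibSubsetsBelow (B : ℕ) : Finset (Finset ℕ) :=
  (fibsBelow B).powerset.filter fun S => ∑ x ∈ S, x < B

lemma mem_fibSubsetsBelow {B : ℕ} {S : Finset ℕ} :
    S ∈ fibSubsetsBelow B ↔ (∀ x ∈ S, IsFibNum x) ∧ ∑ x ∈ S, x < B := by
  simp only [fibSubsetsBelow, mem_filter, mem_powerset, subset_iff, mem_fibsBelow]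
  exact ⟨fun h => ⟨fun x hx => (h.1 hx).1, h.2⟩,
    fun h => ⟨fun x hx => ⟨h.1 x hx, (le_sum_of_mem hx).trans_lt h.2⟩, h.2⟩⟩

lemma fibSubsetsBelow_mono : Monotone fibSubsetsBelow := fun _ _ hB _ hS =>
  mem_fibSubsetsBelow.2 ((mem_fibSubsetsBelow.1 hS).imp_right (·.trans_le hB))

lemma R_eq_card_filter_fibSubsetsBelow {n B : ℕ} (hn : n < B) :
    R n = #((fibSubsetsBelow B).filter fun S => ∑ x ∈ S, x = n) := by
  rw [R, ← Nat.card_eq_finsetCard]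
  refine Nat.card_congr (Equiv.subtypeEquivRight fun S => ?_)
  simp only [mem_filter, mem_fibSubsetsBelow]
  exact ⟨fun h => ⟨⟨h.1, h.2 ▸ hn⟩, h.2⟩, fun h => ⟨h.1.1, h.2⟩⟩

lemma A_eq_card_fibSubsetsBelow (H : ℕ) : A H = #(fibSubsetsBelow (H + 1)) := by
  rw [card_eq_sum_card_fiberwise (f := fun S => ∑ x ∈ S, x) (t := range (H + 1))
    fun S hS => mem_range.2 (mem_fibSubsetsBelow.1 hS).2, A]
  exact sum_congr rfl fun n hn => R_eq_card_filter_fibSubsetsBelow (mem_range.1 hn)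

lemma fibSubsetsBelow_one : fibSubsetsBelow 1 = {∅} := by
  rw [fibSubsetsBelow, fibsBelow_one]
  rfl

lemma card_fibSubsetsBelow_fib_add_three (k : ℕ) :
    #(fibSubsetsBelow (Nat.fib (k + 3))) = 2 ^ k + #(fibSubsetsBelow (Nat.fib (k + 1))) := by
  obtain ⟨hcard, hsum⟩ := card_fibsBelow_fib_add_two_and_sum k
  have hrec : Nat.fib (k + 3) = Nat.fib (k + 1) + Nat.fib (k + 2) := Nat.fib_add_two
  have hmono : Nat.fib (k + 1) ≤ Nat.fib (k + 2) := Nat.fib_le_fib_succ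
  set p := Nat.fib (k + 2)
  have hwithout :
      (fibSubsetsBelow (Nat.fib (k + 3))).filter (p ∉ ·) = (fibsBelow p).powerset := by
    ext S
    simp only [mem_filter, mem_powerset, mem_fibSubsetsBelow, subset_iff, mem_fibsBelow]
    constructor
    · rintro ⟨⟨hfib, hlt⟩, hp⟩ x hx
      refine ⟨hfib x hx, lt_of_le_of_ne ?_ (ne_of_mem_of_not_mem hx hp)⟩
      exact (hfib x hx).le_fib_of_lt_fib_succ ((le_sum_of_mem hx).trans_lt hlt)
    · intro hS
      have hle : ∑ x ∈ S, x ≤ ∑ x ∈ fibsBelow p, x :=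
        sum_le_sum_of_subset fun x hx => mem_fibsBelow.2 (hS hx)
      exact ⟨⟨fun x hx => (hS hx).1, by omega⟩, fun hp => (hS hp).2.false⟩
  have hwith : #((fibSubsetsBelow (Nat.fib (k + 3))).filter (p ∈ ·)) =
      #(fibSubsetsBelow (Nat.fib (k + 1))) := by
    have hnot {S : Finset ℕ} (hS : S ∈ fibSubsetsBelow (Nat.fib (k + 1))) : p ∉ S := by
      intro hp
      have := le_sum_of_mem hp
      have := (mem_fibSubsetsBelow.1 hS).2
      omega
    refine card_nbij' (·.erase p) (insert p) (fun S hS => ?_) (fun S hS => ?_)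
      (fun S hS => insert_erase (mem_filter.1 hS).2) (fun S hS => erase_insert (hnot hS))
    · dsimp only
      obtain ⟨hSW, hp⟩ := mem_filter.1 hS
      obtain ⟨hfib, hlt⟩ := mem_fibSubsetsBelow.1 hSW
      have := add_sum_erase S (fun x => x) hp
      exact mem_fibSubsetsBelow.2 ⟨fun x hx => hfib x (mem_of_mem_erase hx), by omega⟩
    · obtain ⟨hfib, hlt⟩ := mem_fibSubsetsBelow.1 hS
      refine mem_filter.2 ⟨mem_fibSubsetsBelow.2 ⟨?_, ?_⟩, mem_insert_self p S⟩
      · exact forall_mem_insert _ _ _ |>.2 ⟨isFibNum_fib (by omega), hfib⟩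
      · rw [sum_insert (hnot hS)]
        omega
  rw [← card_filter_add_card_filter_not (p := (p ∈ ·)), hwith, hwithout, card_powerset, hcard]
  omega

lemma card_fibSubsetsBelow_fib_bounds : ∀ {n : ℕ}, 0 < n →
    2 ^ n + 2 ≤ 6 * #(fibSubsetsBelow (Nat.fib n)) ∧
      6 * #(fibSubsetsBelow (Nat.fib n)) ≤ 2 ^ n + 4
  | 1, _ | 2, _ => by simp [fibSubsetsBelow_one]
  | k + 3, _ => by
    have := card_fibSubsetsBelow_fib_bounds (n := k + 1) k.succ_pos
    rw [card_fibSubsetsBelow_fib_add_three]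
    have : 2 ^ (k + 1) = 2 * 2 ^ k := by ring
    have : 2 ^ (k + 3) = 8 * 2 ^ k := by ring
    omega

open Real

lemma tendsto_fib_div_goldenRatio_pow :
    Tendsto (fun n : ℕ => (Nat.fib n : ℝ) / goldenRatio ^ n) atTop (𝓝 (1 / √5)) := by
  have hratio : |goldenConj / goldenRatio| < 1 := by
    rw [abs_div, abs_of_pos goldenRatio_pos, div_lt_one goldenRatio_pos, abs_lt]
    exact ⟨by linarith [neg_one_lt_goldenConj, one_lt_goldenRatio],
      goldenConj_neg.trans goldenRatio_pos⟩
  have hlim := ((tendsto_pow_atTop_nhds_zero_of_abs_lt_one hratio).const_sub 1).div_const √5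
  rw [sub_zero] at hlim
  refine hlim.congr fun n => ?_
  rw [coe_fib_eq, div_pow]
  field_simp

lemma tendsto_mul_pow_add_div_pow {a : ℝ} (ha : 1 < a) (c d : ℝ) :
    Tendsto (fun n : ℕ => (c * a ^ n + d) / a ^ n) atTop (𝓝 c) := by
  have hlim := (tendsto_pow_atTop_nhds_zero_of_lt_one (inv_nonneg.2 (by linarith))
    (inv_lt_one_of_one_lt₀ ha)).const_mul d |>.const_add c
  rw [mul_zero, add_zero] at hlim
  refine hlim.congr fun n => ?_
  have : a ^ n ≠ 0 := pow_ne_zero n (by linarith)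
  rw [inv_pow]
  field_simp

lemma tendsto_div_rpow_of_tendsto_div_pow {b p L K : ℝ} (hb : 0 < b) (hL : 0 < L)
    {x y : ℕ → ℝ} (hx : Tendsto (fun n => x n / b ^ n) atTop (𝓝 L))
    (hy : Tendsto (fun n => y n / (b ^ p) ^ n) atTop (𝓝 K)) :
    Tendsto (fun n => y n / x n ^ p) atTop (𝓝 (K / L ^ p)) := by
  refine (hy.div (hx.rpow_const (Or.inl hL.ne')) (rpow_pos_of_pos hL p).ne').congr' ?_
  filter_upwards [hx.eventually_const_lt hL] with n hn
  have hbn : 0 < b ^ n := pow_pos hb n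
  have hxn : 0 ≤ x n := ((div_pos_iff_of_pos_right hbn).1 hn).le
  have hpow : (b ^ n) ^ p = (b ^ p) ^ n := by
    rw [← rpow_natCast_mul hb.le, mul_comm, rpow_mul_natCast hb.le]
  have : (b ^ p) ^ n ≠ 0 := (pow_pos (rpow_pos_of_pos hb p) n).ne'
  rw [Pi.div_apply, div_rpow hxn hbn.le, hpow, div_div_div_cancel_right₀ this]

/-- With `m = greatestFib (H + 1)`, i.e. `F m ≤ H + 1 < F (m + 1)`, the ratio `A H / H ^ p` lies
between `lowerRatio p m` and `upperRatio p m`. -/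
noncomputable def upperRatio (p : ℝ) (m : ℕ) : ℝ :=
  ((2 : ℝ) ^ (m + 1) + 4) / 6 / ((Nat.fib m : ℝ) - 1) ^ p

noncomputable def lowerRatio (p : ℝ) (m : ℕ) : ℝ :=
  ((2 : ℝ) ^ m + 2) / 6 / (Nat.fib (m + 1) : ℝ) ^ p

lemma A_div_rpow_le_upperRatio {p : ℝ} (hp : 0 ≤ p) {H : ℕ} (hH : 1 ≤ H) :
    (A H : ℝ) / (H : ℝ) ^ p ≤ upperRatio p (Nat.greatestFib (H + 1)) := by
  set m := Nat.greatestFib (H + 1)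
  have hA : 6 * A H ≤ 2 ^ (m + 1) + 4 := by
    refine le_trans ?_ (card_fibSubsetsBelow_fib_bounds m.succ_pos).2
    rw [A_eq_card_fibSubsetsBelow]
    exact Nat.mul_le_mul_left 6 <| card_le_card <|
      fibSubsetsBelow_mono (Nat.lt_fib_greatestFib_add_one (H + 1)).le
  have hm : 3 ≤ m := Nat.le_greatestFib.2 (by rw [show Nat.fib 3 = 2 from rfl]; omega)
  have hfib : 2 ≤ Nat.fib m := Nat.fib_mono hm
  have hfibH : Nat.fib m ≤ H + 1 := Nat.fib_greatestFib_le (H + 1)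
  have hfibR : (1 : ℝ) ≤ (Nat.fib m : ℝ) - 1 := by
    have : (2 : ℝ) ≤ Nat.fib m := by exact_mod_cast hfib
    linarith
  refine div_le_div₀ (by positivity) ?_ (rpow_pos_of_pos (by linarith) p) ?_
  · rw [le_div_iff₀ (by norm_num), mul_comm]
    exact_mod_cast hA
  · refine rpow_le_rpow (by linarith) ?_ hp
    have : (Nat.fib m : ℝ) ≤ H + 1 := by exact_mod_cast hfibH
    linarith

lemma lowerRatio_le_A_div_rpow {p : ℝ} (hp : 0 ≤ p) {H : ℕ} (hH : 1 ≤ H) :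
    lowerRatio p (Nat.greatestFib (H + 1)) ≤ (A H : ℝ) / (H : ℝ) ^ p := by
  set m := Nat.greatestFib (H + 1)
  have hA : 2 ^ m + 2 ≤ 6 * A H := by
    refine le_trans (card_fibSubsetsBelow_fib_bounds (Nat.greatestFib_pos.2 H.succ_pos)).1 ?_
    rw [A_eq_card_fibSubsetsBelow]
    exact Nat.mul_le_mul_left 6 <| card_le_card <|
      fibSubsetsBelow_mono (Nat.fib_greatestFib_le (H + 1))
  have hH : (H : ℝ) ≤ Nat.fib (m + 1) := by
    exact_mod_cast (Nat.lt_fib_greatestFib_add_one (H + 1)).le.trans' H.le_succ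
  refine div_le_div₀ (by positivity) ?_ (rpow_pos_of_pos (by positivity) p)
    (rpow_le_rpow (by positivity) hH hp)
  rw [div_le_iff₀ (by norm_num), mul_comm]
  exact_mod_cast hA

lemma tendsto_upperRatio {p : ℝ} (hp : goldenRatio ^ p = 2) :
    Tendsto (upperRatio p) atTop (𝓝 (√5 ^ p / 3)) := by
  have hx : Tendsto (fun n : ℕ => ((Nat.fib n : ℝ) - 1) / goldenRatio ^ n) atTop
      (𝓝 (1 / √5)) := by
    have := tendsto_fib_div_goldenRatio_pow.sub (tendsto_pow_atTop_nhds_zero_of_lt_one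
      (inv_nonneg.2 goldenRatio_pos.le) (inv_lt_one_of_one_lt₀ one_lt_goldenRatio))
    rw [sub_zero] at this
    exact this.congr fun n => by rw [inv_pow, sub_div, one_div]
  have hy : Tendsto (fun n : ℕ => ((2 : ℝ) ^ (n + 1) + 4) / 6 / (goldenRatio ^ p) ^ n) atTop
      (𝓝 (1 / 3)) := by
    rw [hp]
    exact (tendsto_mul_pow_add_div_pow one_lt_two (1 / 3) (2 / 3)).congr fun n => by ring
  have hlim : √5 ^ p / 3 = 1 / 3 / (1 / √5) ^ p := by
    rw [one_div √5, inv_rpow (sqrt_nonneg 5)]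
    field_simp
  rw [hlim]
  exact tendsto_div_rpow_of_tendsto_div_pow goldenRatio_pos (by positivity) hx hy

lemma tendsto_lowerRatio {p : ℝ} (hp : goldenRatio ^ p = 2) :
    Tendsto (lowerRatio p) atTop (𝓝 (√5 ^ p / 12)) := by
  have hx : Tendsto (fun n : ℕ => (Nat.fib (n + 1) : ℝ) / goldenRatio ^ n) atTop
      (𝓝 (goldenRatio * (1 / √5))) := by
    refine (((tendsto_add_atTop_iff_nat 1).2 tendsto_fib_div_goldenRatio_pow).const_mul
      goldenRatio).congr fun n => ?_
    rw [pow_succ]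
    field_simp
  have hy : Tendsto (fun n : ℕ => ((2 : ℝ) ^ n + 2) / 6 / (goldenRatio ^ p) ^ n) atTop
      (𝓝 (1 / 6)) := by
    rw [hp]
    exact (tendsto_mul_pow_add_div_pow one_lt_two (1 / 6) (1 / 3)).congr fun n => by ring
  have hlim : √5 ^ p / 12 = 1 / 6 / (goldenRatio * (1 / √5)) ^ p := by
    rw [mul_one_div, div_rpow goldenRatio_pos.le (sqrt_nonneg 5), hp]
    field_simp
    ring
  rw [hlim]
  exact tendsto_div_rpow_of_tendsto_div_pow goldenRatio_pos (by positivity) hx hy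

/-- `c/2 ≤ liminf A(H)/H^λ ≤ limsup A(H)/H^λ ≤ 2c` where `c = (√5)^λ / 6`. -/
theorem summatory_order_of_magnitude (φ lam c : ℝ)
    (hφ : φ = (1 + Real.sqrt 5) / 2)
    (hlam : lam = Real.log 2 / Real.log φ)
    (hc : c = Real.sqrt 5 ^ lam / 6) :
    c / 2 ≤ liminf (fun H : ℕ => (A H : ℝ) / (H : ℝ) ^ lam) atTop ∧
    liminf (fun H : ℕ => (A H : ℝ) / (H : ℝ) ^ lam) atTop ≤
      limsup (fun H : ℕ => (A H : ℝ) / (H : ℝ) ^ lam) atTop ∧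
    limsup (fun H : ℕ => (A H : ℝ) / (H : ℝ) ^ lam) atTop ≤ 2 * c := by
  obtain rfl : φ = goldenRatio := hφ
  have hlogφ : 0 < Real.log goldenRatio := log_pos one_lt_goldenRatio
  have hlam0 : 0 ≤ lam := hlam ▸ (div_pos (log_pos one_lt_two) hlogφ).le
  have hφlam : goldenRatio ^ lam = 2 := by
    rw [hlam, rpow_def_of_pos goldenRatio_pos, mul_div_cancel₀ _ hlogφ.ne',
      exp_log two_pos]
  set f := fun H : ℕ => (A H : ℝ) / (H : ℝ) ^ lam
  have hm : Tendsto (fun H => Nat.greatestFib (H + 1)) atTop atTop :=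
    (Nat.greatestFib_mono.tendsto_atTop_atTop fun m =>
      ⟨Nat.fib m, Nat.le_greatestFib.2 le_rfl⟩).comp (tendsto_add_atTop_nat 1)
  have hupper := (tendsto_upperRatio hφlam).comp hm
  have hlower := (tendsto_lowerRatio hφlam).comp hm
  have hf_le : f ≤ᶠ[atTop] upperRatio lam ∘ fun H => Nat.greatestFib (H + 1) :=
    eventually_atTop.2 ⟨1, fun H hH => A_div_rpow_le_upperRatio hlam0 hH⟩
  have hle_f : lowerRatio lam ∘ (fun H => Nat.greatestFib (H + 1)) ≤ᶠ[atTop] f :=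
    eventually_atTop.2 ⟨1, fun H hH => lowerRatio_le_A_div_rpow hlam0 hH⟩
  have hf_bddBelow : IsBoundedUnder (· ≥ ·) atTop f :=
    isBoundedUnder_of_eventually_ge (.of_forall fun H => by positivity)
  have hf_bddAbove : IsBoundedUnder (· ≤ ·) atTop f :=
    hupper.isBoundedUnder_le.mono_le hf_le
  refine ⟨?_, liminf_le_limsup hf_bddAbove hf_bddBelow, ?_⟩
  · calc c / 2 = √5 ^ lam / 12 := by rw [hc]; ring
      _ = liminf _ atTop := hlower.liminf_eq.symm
      _ ≤ liminf f atTop :=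
        liminf_le_liminf hle_f hlower.isBoundedUnder_ge hf_bddAbove.isCoboundedUnder_ge
  · calc limsup f atTop
        ≤ limsup (upperRatio lam ∘ fun H => Nat.greatestFib (H + 1)) atTop :=
          limsup_le_limsup hf_le hf_bddBelow.isCoboundedUnder_le hupper.isBoundedUnder_le
      _ = 2 * c := by rw [hupper.limsup_eq, hc]; ring
end

section
/- Let t ≥ 2 and m ≥ 2t be integers, and let x be an integer with F_{m−2t+1} ≤ x < F_{m−2t+3}. Then A(F_m + x) = t·A(x) − A(x − F_{m−2t+2}) + f(t)·2^{m−2t}. -/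
/-!
For `y < F_{k+2}` a partition of any `n ≤ y` into distinct Fibonacci numbers only uses
`F_2, …, F_{k+1}`, so `A y` is the number `N_k y` of subsets of `{F_2, …, F_{k+1}}` with sum at
most `y`. This count obeys `N_{k+1} y = N_k y + N_k (y - F_{k+2})`, and `N_k y = 2^k` as soon as
`y ≥ F_{k+3} - 2 = F_2 + ⋯ + F_{k+1}`. Write `n = m - 2t`. Applying the recursion twice gives
`N_{n+2j+3} (F_{n+2j+4} + x) = 2^{n+2j+1} + N_{n+2j+1} (F_{n+2j+2} + x) + N_{n+1} x`, because
`F_{n+1} ≤ x < F_{n+3}`. Descending from `N_{m-1} (F_m + x)` to `N_{n+1} (F_{n+2} + x)`, which is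
`2^n + N_n x`, the powers of two add up to `2^n (1 + 2 + 2^3 + ⋯ + 2^{2t-3}) = f(t) 2^n`, each
`N_{n+1} x` is `A x`, and the remainder is `N_n x = A x - A (x - F_{n+2})`.
-/

open scoped BigOperators
open Filter Topology

/-- `f t = 1 + 2(4^{t-1} - 1)/3` (an integer for `t ≥ 1`). -/
def fInt (t : ℕ) : ℤ := 1 + 2 * (4 ^ (t - 1) - 1) / 3

open Nat (fib)

/-- `fibCount k y` is the count `N_k y` of the header. Taking `y : ℤ` makes it vanish for `y < 0`,
so the recursion needs no case split on `F_{k+2} ≤ y`. -/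
def fibCount : ℕ → ℤ → ℤ
  | 0, y => if 0 ≤ y then 1 else 0
  | k + 1, y => fibCount k y + fibCount k (y - fib (k + 2))

namespace fibCount

theorem succ (k : ℕ) (y : ℤ) :
    fibCount (k + 1) y = fibCount k y + fibCount k (y - fib (k + 2)) := rfl

theorem of_neg {y : ℤ} (hy : y < 0) : ∀ k, fibCount k y = 0
  | 0 => if_neg (by omega)
  | k + 1 => by
    rw [succ, of_neg hy k, of_neg (by omega) k, add_zero]

theorem succ_of_lt {k : ℕ} {y : ℤ} (hy : y < fib (k + 2)) :
    fibCount (k + 1) y = fibCount k y := by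
  rw [succ, of_neg (y := y - fib (k + 2)) (by omega), add_zero]

theorem eq_of_le {a b : ℕ} (hab : a ≤ b) {y : ℤ} (hy : y < fib (a + 2)) :
    fibCount b y = fibCount a y := by
  induction b, hab using Nat.le_induction with
  | base => rfl
  | succ b hab ih =>
    have : (fib (a + 2) : ℤ) ≤ fib (b + 2) := by exact_mod_cast Nat.fib_mono (by omega)
    rw [succ_of_lt (by omega), ih]

theorem eq_two_pow {k : ℕ} {y : ℤ} (hy : (fib (k + 3) : ℤ) ≤ y + 2) :
    fibCount k y = 2 ^ k := by
  induction k generalizing y with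
  | zero => exact if_pos (by change ((2 : ℕ) : ℤ) ≤ y + 2 at hy; omega)
  | succ k ih =>
    replace hy : (fib (k + 4) : ℤ) ≤ y + 2 := hy
    have hfib : (fib (k + 4) : ℤ) = fib (k + 2) + fib (k + 3) := by exact_mod_cast Nat.fib_add_two
    have hmono : (fib (k + 3) : ℤ) ≤ fib (k + 4) := by exact_mod_cast Nat.fib_mono (by omega)
    rw [succ, ih (by omega), ih (by omega)]
    ring

end fibCount

theorem fInt_one : fInt 1 = 1 := rfl

theorem fInt_succ_succ (t : ℕ) : fInt (t + 2) = fInt (t + 1) + 2 ^ (2 * t + 1) := by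
  have h : 2 * ((4 : ℤ) ^ (t + 1) - 1) = 2 * (4 ^ t - 1) + 2 ^ (2 * t + 1) * 3 := by
    rw [pow_succ 2, pow_mul]; ring
  show 1 + 2 * ((4 : ℤ) ^ (t + 1) - 1) / 3 = 1 + 2 * (4 ^ t - 1) / 3 + 2 ^ (2 * t + 1)
  rw [h, Int.add_mul_ediv_right _ _ three_ne_zero]
  ring

theorem fibCount_add_two_fib_add {k : ℕ} {x : ℤ} (hx : -2 ≤ x) :
    fibCount (k + 2) (fib (k + 3) + x) =
      2 ^ k + fibCount k (fib (k + 1) + x) + fibCount (k + 1) x := by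
  have hfib : (fib (k + 3) : ℤ) = fib (k + 1) + fib (k + 2) := by exact_mod_cast Nat.fib_add_two
  rw [fibCount.succ, add_sub_cancel_left, fibCount.succ, fibCount.eq_two_pow (by omega),
    show (fib (k + 3) : ℤ) + x - fib (k + 2) = fib (k + 1) + x by omega]

theorem fibCount_chain {n : ℕ} {x : ℤ} (hx₁ : (fib (n + 1) : ℤ) ≤ x)
    (hx₂ : x < fib (n + 3)) :
    ∀ i : ℕ, fibCount (n + 2 * i + 1) (fib (n + 2 * i + 2) + x) =
      2 ^ n * fInt (i + 1) + fibCount n x + i * fibCount (n + 1) x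
  | 0 => by
    have hfib : (fib (n + 3) : ℤ) = fib (n + 1) + fib (n + 2) := by exact_mod_cast Nat.fib_add_two
    simp only [Nat.mul_zero, Nat.add_zero, Nat.cast_zero, zero_mul]
    rw [fibCount.succ, fibCount.eq_two_pow (by omega), add_sub_cancel_left, fInt_one]
    ring
  | i + 1 => by
    have hx : 0 ≤ x := le_trans (by positivity) hx₁
    rw [show n + 2 * (i + 1) + 1 = n + 2 * i + 1 + 2 by ring,
      show n + 2 * (i + 1) + 2 = n + 2 * i + 1 + 3 by ring, fibCount_add_two_fib_add (by omega),
      fibCount.eq_of_le (by omega) hx₂, fibCount_chain hx₁ hx₂ i, fInt_succ_succ]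
    push_cast
    ring

def fibSet (k : ℕ) : Finset ℕ := (Finset.range k).image fun i => fib (i + 2)

theorem mem_fibSet {k x : ℕ} : x ∈ fibSet k ↔ ∃ i < k, fib (i + 2) = x := by
  simp [fibSet]

theorem fib_notMem_fibSet (k : ℕ) : fib (k + 2) ∉ fibSet k := by
  rw [mem_fibSet]
  rintro ⟨i, hi, heq⟩
  exact (Nat.fib_add_two_strictMono hi).ne heq

theorem fibSet_succ (k : ℕ) : fibSet (k + 1) = insert (fib (k + 2)) (fibSet k) := by
  rw [fibSet, Finset.range_add_one, Finset.image_insert, fibSet]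

theorem isFibNum_of_mem_fibSet {k x : ℕ} (hx : x ∈ fibSet k) : IsFibNum x := by
  obtain ⟨i, -, rfl⟩ := mem_fibSet.1 hx
  exact ⟨i + 2, by omega, rfl⟩

theorem mem_fibSet_of_isFibNum {k x : ℕ} (hx : IsFibNum x) (hlt : x < fib (k + 2)) :
    x ∈ fibSet k := by
  obtain ⟨j, hj, rfl⟩ := hx
  have hfib : fib (j - 2 + 2) = fib j := by
    obtain rfl | hj : j = 1 ∨ 2 ≤ j := by omega
    · rfl
    · rw [Nat.sub_add_cancel hj]
  rw [← hfib, Nat.fib_lt_fib (by omega)] at hlt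
  exact mem_fibSet.2 ⟨j - 2, by omega, hfib⟩

theorem card_filter_sum_le_eq_fibCount (k : ℕ) (y : ℤ) :
    (((fibSet k).powerset.filter fun S => ((∑ x ∈ S, x : ℕ) : ℤ) ≤ y).card : ℤ) =
      fibCount k y := by
  induction k generalizing y with
  | zero => by_cases hy : 0 ≤ y <;> simp [fibSet, fibCount, Finset.filter_singleton, hy]
  | succ k ih =>
    have hnot := fib_notMem_fibSet k
    have hinsert : ∀ S ∈ (fibSet k).powerset,
        (((∑ x ∈ insert (fib (k + 2)) S, x : ℕ) : ℤ) ≤ y) ↔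
          ((∑ x ∈ S, x : ℕ) : ℤ) ≤ y - fib (k + 2) := by
      intro S hS
      rw [Finset.sum_insert fun h ↦ hnot (Finset.mem_powerset.1 hS h)]
      push_cast
      exact le_sub_iff_add_le'.symm
    rw [fibSet_succ, Finset.card_filter, Finset.sum_powerset_insert hnot, ← Finset.card_filter,
      Finset.sum_congr rfl fun S hS ↦ if_congr (hinsert S hS) rfl rfl, ← Finset.card_filter,
      fibCount.succ, ← ih, ← ih]
    push_cast
    rfl

theorem R_eq_card_filter {k n : ℕ} (hn : n < fib (k + 2)) :
    R n = ((fibSet k).powerset.filter fun S => ∑ x ∈ S, x = n).card := by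
  have hiff : ∀ S : Finset ℕ, ((∀ x ∈ S, IsFibNum x) ∧ ∑ x ∈ S, x = n) ↔
      S ∈ (fibSet k).powerset.filter fun S => ∑ x ∈ S, x = n := by
    intro S
    rw [Finset.mem_filter, Finset.mem_powerset]
    refine and_congr_left fun hsum ↦ ⟨fun hfib x hx ↦ mem_fibSet_of_isFibNum (hfib x hx) ?_,
      fun hsub x hx ↦ isFibNum_of_mem_fibSet (hsub hx)⟩
    exact (hsum ▸ Finset.single_le_sum (fun _ _ ↦ Nat.zero_le _) hx).trans_lt hn
  rw [R, Nat.card_congr (Equiv.subtypeEquivRight hiff), Nat.card_eq_fintype_card,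
    Fintype.card_coe]

theorem AZ_eq_fibCount {k : ℕ} {y : ℤ} (hy : y < fib (k + 2)) : AZ y = fibCount k y := by
  rcases lt_or_ge y 0 with hneg | hnonneg
  · rw [AZ, if_pos hneg, fibCount.of_neg hneg]
  obtain ⟨N, rfl⟩ := Int.eq_ofNat_of_zero_le hnonneg
  have hN : N < fib (k + 2) := by exact_mod_cast hy
  rw [AZ, if_neg (by omega), Int.toNat_natCast, ← card_filter_sum_le_eq_fibCount]
  simp only [Nat.cast_le]
  norm_cast
  rw [Finset.card_eq_sum_card_fiberwise (f := fun S ↦ ∑ x ∈ S, x) (t := Finset.range (N + 1))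
    fun S hS ↦ Finset.mem_range.2 (Nat.lt_succ_of_le (Finset.mem_filter.1 hS).2)]
  refine Finset.sum_congr rfl fun n hn ↦ ?_
  rw [R_eq_card_filter (k := k) (by rw [Finset.mem_range] at hn; omega), Finset.filter_filter]
  refine congrArg _ (Finset.filter_congr fun S _ ↦ (and_iff_right_of_imp fun h ↦ ?_).symm)
  exact h.le.trans (Nat.lt_succ_iff.1 (Finset.mem_range.1 hn))

/-- Lemma 3.3: the elaborate recursion for the summatory function. -/
theorem summatory_super_recursion (t m : ℕ) (ht : 2 ≤ t) (hm : 2 * t ≤ m) (x : ℤ)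
    (hx1 : (Nat.fib (m - 2 * t + 1) : ℤ) ≤ x)
    (hx2 : x < (Nat.fib (m - 2 * t + 3) : ℤ)) :
    AZ ((Nat.fib m : ℤ) + x) =
      (t : ℤ) * AZ x - AZ (x - (Nat.fib (m - 2 * t + 2) : ℤ))
        + fInt t * 2 ^ (m - 2 * t) := by
  obtain ⟨n, rfl⟩ : ∃ n, m = n + 2 * t := ⟨m - 2 * t, by omega⟩
  obtain ⟨i, rfl⟩ : ∃ i, t = i + 1 := ⟨t - 1, by omega⟩
  rw [Nat.add_sub_cancel] at hx1 hx2 ⊢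
  have hfib : (fib (n + 3) : ℤ) = fib (n + 1) + fib (n + 2) := by exact_mod_cast Nat.fib_add_two
  have hfib' : (fib (n + 2 * i + 3) : ℤ) = fib (n + 2 * i + 1) + fib (n + 2 * i + 2) := by
    exact_mod_cast Nat.fib_add_two
  have hmono : (fib (n + 1) : ℤ) ≤ fib (n + 2) := by exact_mod_cast Nat.fib_mono (by omega)
  have hmono' : (fib (n + 3) : ℤ) ≤ fib (n + 2 * i + 1) := by
    exact_mod_cast Nat.fib_mono (by omega)
  have hA : AZ (fib (n + 2 * (i + 1)) + x) =
      fibCount (n + 2 * i + 1) (fib (n + 2 * i + 2) + x) := by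
    rw [show n + 2 * (i + 1) = n + 2 * i + 2 by ring]
    exact AZ_eq_fibCount (by rw [show n + 2 * i + 1 + 2 = n + 2 * i + 3 by ring]; omega)
  rw [hA, AZ_eq_fibCount hx2, AZ_eq_fibCount (k := n) (by omega), fibCount_chain hx1 hx2 i,
    fibCount.succ n x]
  push_cast
  ring
end

section
/- Let t ≥ 2 and m ≥ 2t be integers, and let x be an integer with F_{m−2t+1} ≤ x < F_{m−2t+3}. Set (ε, y) = (1, x − F_{m−2t+2}) if F_{m−2t+2} ≤ x < F_{m−2t+3}, and (ε, y) = (0, x − F_{m−2t+1}) if F_{m−2t+1} ≤ x < F_{m−2t+2}. Then A(F_m + x) = t·A(x) − ε·A(y) + f(t)·2^{m−2t}. -/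
open scoped BigOperators
open Filter Topology

/-!
Let `L(H)` be the finite sets of Fibonacci numbers with sum at most `H`, so `A H = #L(H)`.
Removing an element `v` identifies the sets of `L(H + v)` containing `v` with the sets of `L(H)`
avoiding `v`. For `0 ≤ x < F (k+2)`, sort the sets of `L(F (k+3) + x)` by whether they contain
`F (k+3)` or `F (k+2)` (never both): this gives the super-recursion
`A(F (k+3) + x) = A x + A(F (k+1) + x) - A(x - F k) + 2 ^ k`, the last term counting the subsets of
`{F 2, …, F (k+1)}`. Applied twice it gives the case `t = 2`; applied once more at each step, where
its correction term vanishes, it gives the induction from `t` to `t + 1`.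
-/

open Finset

section FinsetsSumLE

variable (s : Set ℕ)

open Classical in
noncomputable def finsetsSumLE (H : ℕ) : Finset (Finset ℕ) :=
  {S ∈ (range (H + 1)).powerset | (∀ a ∈ S, a ∈ s) ∧ ∑ a ∈ S, a ≤ H}

variable {s}

theorem mem_finsetsSumLE {S : Finset ℕ} {H : ℕ} :
    S ∈ finsetsSumLE s H ↔ (∀ a ∈ S, a ∈ s) ∧ ∑ a ∈ S, a ≤ H := by
  classical
  refine ⟨fun h => (mem_filter.mp h).2, fun h => mem_filter.mpr ⟨?_, h⟩⟩
  refine mem_powerset.mpr fun a ha => mem_range.mpr (Nat.lt_succ_of_le ?_)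
  exact (single_le_sum (fun _ _ => Nat.zero_le _) ha).trans h.2

theorem le_of_mem_finsetsSumLE {S : Finset ℕ} {H a : ℕ} (hS : S ∈ finsetsSumLE s H) (ha : a ∈ S) :
    a ≤ H :=
  (single_le_sum (f := fun a => a) (fun _ _ => Nat.zero_le _) ha).trans (mem_finsetsSumLE.mp hS).2

theorem add_le_of_mem_finsetsSumLE {S : Finset ℕ} {H u v : ℕ} (hS : S ∈ finsetsSumLE s H)
    (hu : u ∈ S) (hv : v ∈ S) (huv : u ≠ v) : u + v ≤ H := by
  calc u + v = ∑ a ∈ {u, v}, a := (sum_pair (f := fun a => a) huv).symm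
    _ ≤ ∑ a ∈ S, a := sum_le_sum_of_subset (insert_subset hu (singleton_subset_iff.mpr hv))
    _ ≤ H := (mem_finsetsSumLE.mp hS).2

theorem filter_notMem_finsetsSumLE_of_lt {H v : ℕ} (h : H < v) :
    {S ∈ finsetsSumLE s H | v ∉ S} = finsetsSumLE s H := by
  refine filter_true_of_mem fun S hS hvS => ?_
  have := le_of_mem_finsetsSumLE hS hvS
  omega

theorem card_filter_mem_finsetsSumLE_add {H v : ℕ} (hv : v ∈ s) :
    #{S ∈ finsetsSumLE s (H + v) | v ∈ S} = #{S ∈ finsetsSumLE s H | v ∉ S} := by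
  refine card_bij' (fun S _ => S.erase v) (fun T _ => insert v T) ?_ ?_
    (fun S hS => insert_erase (mem_filter.mp hS).2) (fun T hT => erase_insert (mem_filter.mp hT).2)
  · intro S hS
    obtain ⟨hSH, hvS⟩ := mem_filter.mp hS
    obtain ⟨hmem, hsum⟩ := mem_finsetsSumLE.mp hSH
    have := add_sum_erase S (fun a => a) hvS
    refine mem_filter.mpr ⟨mem_finsetsSumLE.mpr ⟨fun a ha => hmem a (mem_of_mem_erase ha), ?_⟩,
      notMem_erase v S⟩
    omega
  · intro T hT
    obtain ⟨hTH, hvT⟩ := mem_filter.mp hT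
    obtain ⟨hmem, hsum⟩ := mem_finsetsSumLE.mp hTH
    have := sum_insert (f := fun a => a) hvT
    refine mem_filter.mpr ⟨mem_finsetsSumLE.mpr ⟨?_, ?_⟩, mem_insert_self v T⟩
    · simpa only [forall_mem_insert] using ⟨hv, hmem⟩
    · omega

end FinsetsSumLE

local notation "fibSetsLE" => finsetsSumLE (Set.ofPred IsFibNum)

theorem isFibNum_fib_s10 {j : ℕ} (hj : 0 < j) : IsFibNum (Nat.fib j) := ⟨j, hj, rfl⟩

theorem isFibNum_iff {a : ℕ} : IsFibNum a ↔ ∃ j, 2 ≤ j ∧ Nat.fib j = a := by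
  constructor
  · rintro ⟨j, hj, rfl⟩
    obtain rfl | hj := (Nat.one_le_iff_ne_zero.mpr hj.ne').eq_or_lt
    · exact ⟨2, le_rfl, rfl⟩
    · exact ⟨j, hj, rfl⟩
  · rintro ⟨j, hj, rfl⟩
    exact isFibNum_fib_s10 (by omega)

theorem R_eq_card_filter_sum_eq {n H : ℕ} (h : n ≤ H) :
    R n = #{S ∈ fibSetsLE H | ∑ a ∈ S, a = n} := by
  rw [R, ← Nat.card_eq_finsetCard]
  refine Nat.card_congr (Equiv.subtypeEquivRight fun S => ?_)
  simp only [mem_filter, mem_finsetsSumLE]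
  exact ⟨fun ⟨hfib, hsum⟩ => ⟨⟨hfib, hsum ▸ h⟩, hsum⟩, fun ⟨⟨hfib, _⟩, hsum⟩ => ⟨hfib, hsum⟩⟩

theorem AZ_natCast (H : ℕ) : AZ H = #(fibSetsLE H) := by
  have hmaps : ((fibSetsLE H : Finset (Finset ℕ)) : Set (Finset ℕ)).MapsTo
      (fun S => ∑ a ∈ S, a) (range (H + 1)) := fun S hS =>
    mem_range.mpr (Nat.lt_succ_of_le (mem_finsetsSumLE.mp hS).2)
  rw [AZ, if_neg (by omega), Int.toNat_natCast, card_eq_sum_card_fiberwise hmaps]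
  push_cast
  exact sum_congr rfl fun n hn =>
    congrArg _ (R_eq_card_filter_sum_eq (Nat.lt_succ_iff.mp (mem_range.mp hn)))

theorem AZ_of_neg {H : ℤ} (h : H < 0) : AZ H = 0 := if_pos h

theorem card_filter_mem_fibSetsLE {H v : ℕ} (hv : IsFibNum v) (h : H < 2 * v) :
    (#{S ∈ fibSetsLE H | v ∈ S} : ℤ) = AZ (H - v) := by
  rcases lt_or_ge H v with hHv | hvH
  · rw [AZ_of_neg (by omega), filter_eq_empty_iff.mpr fun S hS hvS => ?_, card_empty,
      Nat.cast_zero]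
    have := le_of_mem_finsetsSumLE hS hvS
    omega
  · obtain ⟨H, rfl⟩ := Nat.exists_eq_add_of_le' hvH
    rw [card_filter_mem_finsetsSumLE_add hv, filter_notMem_finsetsSumLE_of_lt (by omega),
      Nat.cast_add, add_sub_cancel_right, AZ_natCast]

theorem card_filter_mem_fibSetsLE_add {H v : ℕ} (hv : IsFibNum v) (h : H < 2 * v) :
    (#{S ∈ fibSetsLE (H + v) | v ∈ S} : ℤ) = AZ H - AZ (H - v) := by
  have h_compl := card_filter_add_card_filter_not (s := fibSetsLE H) (fun S => v ∈ S)
  rw [card_filter_mem_finsetsSumLE_add hv, AZ_natCast, ← card_filter_mem_fibSetsLE hv h,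
    ← h_compl]
  push_cast
  ring

theorem sum_fib_Icc_two_le_s10 (k : ℕ) : ∑ j ∈ Icc 2 (k + 1), Nat.fib j ≤ Nat.fib (k + 3) := by
  have hsum : Nat.fib (k + 3) = ∑ j ∈ range (k + 2), Nat.fib j + 1 :=
    Nat.fib_succ_eq_succ_sum (k + 2)
  have hsub : ∑ j ∈ Icc 2 (k + 1), Nat.fib j ≤ ∑ j ∈ range (k + 2), Nat.fib j :=
    sum_le_sum_of_subset fun j hj => mem_range.mpr (by have := (mem_Icc.mp hj).2; omega)
  omega

theorem filter_notMem_notMem_fibSetsLE {k z : ℕ} (hz : z < Nat.fib (k + 2)) :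
    {S ∈ fibSetsLE (Nat.fib (k + 3) + z) | Nat.fib (k + 3) ∉ S ∧ Nat.fib (k + 2) ∉ S} =
      ((Icc 2 (k + 1)).image Nat.fib).powerset := by
  have hfib4 : Nat.fib (k + 4) = Nat.fib (k + 2) + Nat.fib (k + 3) := Nat.fib_add_two
  ext S
  simp only [mem_filter, mem_powerset]
  constructor
  · rintro ⟨hSL, h3, h2⟩ a ha
    obtain ⟨j, hj, rfl⟩ := isFibNum_iff.mp ((mem_finsetsSumLE.mp hSL).1 _ ha)
    have hjk : j < k + 4 := by
      have := le_of_mem_finsetsSumLE hSL ha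
      exact (Nat.fib_lt_fib hj).mp (by omega)
    have : j ≠ k + 3 := by rintro rfl; exact h3 ha
    have : j ≠ k + 2 := by rintro rfl; exact h2 ha
    exact mem_image_of_mem _ (mem_Icc.mpr ⟨hj, by omega⟩)
  · intro hS
    have hsub : ∀ j, Nat.fib j ∈ S → 2 ≤ j → j ≤ k + 1 := fun j hj h2 => by
      obtain ⟨i, hi, hij⟩ := mem_image.mp (hS hj)
      have hi := mem_Icc.mp hi
      have := Nat.fib_strictMonoOn.injOn hi.1 h2 hij
      omega
    refine ⟨mem_finsetsSumLE.mpr ⟨fun a ha => ?_, ?_⟩, fun h => by simpa using hsub _ h,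
      fun h => by simpa using hsub _ h⟩
    · obtain ⟨i, hi, rfl⟩ := mem_image.mp (hS ha)
      exact isFibNum_fib_s10 (by have := (mem_Icc.mp hi).1; omega)
    · calc ∑ a ∈ S, a ≤ ∑ a ∈ (Icc 2 (k + 1)).image Nat.fib, a := sum_le_sum_of_subset hS
        _ ≤ ∑ j ∈ Icc 2 (k + 1), Nat.fib j := sum_image_le_of_nonneg fun _ _ => Nat.zero_le _
        _ ≤ Nat.fib (k + 3) + z := (sum_fib_Icc_two_le_s10 k).trans (Nat.le_add_right _ _)

theorem AZ_fib_add_three (k : ℕ) {x : ℤ} (hx0 : 0 ≤ x) (hx : x < Nat.fib (k + 2)) :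
    AZ (Nat.fib (k + 3) + x) =
      AZ x + AZ (Nat.fib (k + 1) + x) - AZ (x - Nat.fib k) + 2 ^ k := by
  lift x to ℕ using hx0 with z
  have hz : z < Nat.fib (k + 2) := by exact_mod_cast hx
  have h_none : #{S ∈ fibSetsLE (Nat.fib (k + 3) + z) |
      Nat.fib (k + 3) ∉ S ∧ Nat.fib (k + 2) ∉ S} = 2 ^ k := by
    rw [filter_notMem_notMem_fibSetsLE hz, card_powerset, card_image_of_injOn, Nat.card_Icc,
      show k + 1 + 1 - 2 = k by omega]
    exact Nat.fib_strictMonoOn.injOn.mono fun j hj => (mem_Icc.mp hj).1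
  have ha_fib : IsFibNum (Nat.fib (k + 3)) := isFibNum_fib_s10 (by omega)
  have hb_fib : IsFibNum (Nat.fib (k + 2)) := isFibNum_fib_s10 (by omega)
  have ha : Nat.fib (k + 3) = Nat.fib (k + 1) + Nat.fib (k + 2) := Nat.fib_add_two
  have hb : Nat.fib (k + 2) = Nat.fib k + Nat.fib (k + 1) := Nat.fib_add_two
  have hk1 : 0 < Nat.fib (k + 1) := Nat.fib_pos.mpr k.succ_pos
  generalize Nat.fib (k + 3) = a at *
  generalize Nat.fib (k + 2) = b at *
  have h_a : (#{S ∈ fibSetsLE (a + z) | a ∈ S} : ℤ) = AZ z := by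
    rw [card_filter_mem_fibSetsLE (H := a + z) ha_fib (by omega), Nat.cast_add,
      add_sub_cancel_left]
  have h_b : (#{S ∈ fibSetsLE (a + z) | a ∉ S ∧ b ∈ S} : ℤ) =
      AZ (Nat.fib (k + 1) + z) - AZ (z - Nat.fib k) := by
    -- no set contains both `a` and `b`, as `a + b > a + z`
    have hbL : {S ∈ fibSetsLE (a + z) | a ∉ S ∧ b ∈ S} = {S ∈ fibSetsLE (a + z) | b ∈ S} := by
      refine filter_congr fun S hS => ⟨And.right, fun hbS => ⟨fun haS => ?_, hbS⟩⟩
      have := add_le_of_mem_finsetsSumLE hS haS hbS (by omega)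
      omega
    rw [hbL, ha, add_right_comm, card_filter_mem_fibSetsLE_add hb_fib (by omega)]
    push_cast
    rw [show (Nat.fib (k + 1) + z : ℤ) - b = z - Nat.fib k by omega]
  have h_split := card_filter_add_card_filter_not (s := fibSetsLE (a + z)) (fun S => a ∈ S)
  have h_split' := card_filter_add_card_filter_not (s := {S ∈ fibSetsLE (a + z) | a ∉ S})
    (fun S => b ∈ S)
  rw [filter_filter, filter_filter] at h_split'
  rw [← Nat.cast_add, AZ_natCast, ← h_split, ← h_split', h_none]
  push_cast
  rw [h_a, h_b]
  ring

theorem fInt_add_three (s : ℕ) : fInt (s + 3) = fInt (s + 2) + 2 ^ (2 * s + 3) := by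
  obtain ⟨q, hq⟩ : (3 : ℤ) ∣ 4 ^ (s + 1) - 1 := by
    simpa using sub_dvd_pow_sub_pow (4 : ℤ) 1 (s + 1)
  have h2 : (2 : ℤ) ^ (2 * s + 3) = 2 * 4 ^ (s + 1) := by
    rw [show 2 * s + 3 = 2 * (s + 1) + 1 by ring, pow_succ, pow_mul]
    norm_num
    ring
  rw [fInt, fInt, show s + 3 - 1 = s + 1 + 1 by omega, show s + 2 - 1 = s + 1 by omega, h2,
    pow_succ]
  generalize (4 : ℤ) ^ (s + 1) = p at *
  omega

theorem AZ_fib_add_of_two_le {t : ℕ} (ht : 2 ≤ t) (k : ℕ) {x : ℤ}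
    (hx1 : (Nat.fib (k + 1) : ℤ) ≤ x) (hx2 : x < Nat.fib (k + 3)) :
    AZ (Nat.fib (2 * t + k) + x) = t * AZ x - AZ (x - Nat.fib (k + 2)) + fInt t * 2 ^ k := by
  have hx0 : 0 ≤ x := le_trans (Int.natCast_nonneg _) hx1
  obtain ⟨s, rfl⟩ : ∃ s, t = s + 2 := ⟨t - 2, by omega⟩
  induction s with
  | zero =>
    have h3 : (Nat.fib (k + 3) : ℤ) = Nat.fib (k + 1) + Nat.fib (k + 2) := by
      exact_mod_cast Nat.fib_add_two
    have h2 : (Nat.fib (k + 2) : ℤ) = Nat.fib k + Nat.fib (k + 1) := by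
      exact_mod_cast Nat.fib_add_two
    have hk1 := AZ_fib_add_three (k + 1) hx0 hx2
    have hk := AZ_fib_add_three k (x := x - Nat.fib (k + 1)) (by omega) (by omega)
    rw [show (Nat.fib (k + 3) : ℤ) + (x - Nat.fib (k + 1)) = Nat.fib (k + 2) + x by omega,
      show (Nat.fib (k + 1) : ℤ) + (x - Nat.fib (k + 1)) = x by ring,
      show x - Nat.fib (k + 1) - Nat.fib k = x - Nat.fib (k + 2) by omega] at hk
    rw [show 2 * (0 + 2) + k = k + 1 + 3 by ring, hk1, hk, show fInt (0 + 2) = 3 from rfl]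
    push_cast
    ring
  | succ s ih =>
    have hK := AZ_fib_add_three (2 * s + k + 3) hx0
      (hx2.trans_le (by exact_mod_cast Nat.fib_mono (by omega)))
    rw [AZ_of_neg (H := x - Nat.fib (2 * s + k + 3)) ?_] at hK
    · rw [show 2 * (s + 1 + 2) + k = 2 * s + k + 3 + 3 by ring, hK,
        show 2 * s + k + 3 + 1 = 2 * (s + 2) + k by ring, ih (by omega), fInt_add_three]
      push_cast
      ring
    · have : (Nat.fib (k + 3) : ℤ) ≤ Nat.fib (2 * s + k + 3) := by
        exact_mod_cast Nat.fib_mono (by omega)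
      omega

/-- Corollary 3.4. -/
theorem summatory_super_recursion_cor (t m : ℕ) (ht : 2 ≤ t) (hm : 2 * t ≤ m) (x : ℤ)
    (hx1 : (Nat.fib (m - 2 * t + 1) : ℤ) ≤ x)
    (hx2 : x < (Nat.fib (m - 2 * t + 3) : ℤ))
    (ε y : ℤ)
    (hcase :
      ((Nat.fib (m - 2 * t + 2) : ℤ) ≤ x ∧ x < (Nat.fib (m - 2 * t + 3) : ℤ) ∧
        ε = 1 ∧ y = x - (Nat.fib (m - 2 * t + 2) : ℤ)) ∨
      ((Nat.fib (m - 2 * t + 1) : ℤ) ≤ x ∧ x < (Nat.fib (m - 2 * t + 2) : ℤ) ∧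
        ε = 0 ∧ y = x - (Nat.fib (m - 2 * t + 1) : ℤ))) :
    AZ ((Nat.fib m : ℤ) + x) =
      (t : ℤ) * AZ x - ε * AZ y + fInt t * 2 ^ (m - 2 * t) := by
  obtain ⟨k, rfl⟩ : ∃ k, m = 2 * t + k := ⟨m - 2 * t, by omega⟩
  rw [Nat.add_sub_cancel_left] at hx1 hx2 hcase ⊢
  rw [AZ_fib_add_of_two_le ht k hx1 hx2]
  rcases hcase with ⟨-, -, rfl, rfl⟩ | ⟨-, hx, rfl, -⟩
  · ring
  · rw [AZ_of_neg (sub_neg.mpr hx)]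
    ring
end
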